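/- arXiv:1904.10907 — 4 statements merged into one kernel-verified Lean document; each statement's English description precedes it below -/
import Mathlib

section
/- For n ≥ 3, the automorphism group of the Morse complex of the cycle C_n is isomorphic to the automorphism group of the cycle graph C_{2n}, i.e., to the dihedral group of order 4n. -/
open Finset

/-- An abstract simplicial complex on vertex type `V`. -/
structure SComplex (V : Type) [DecidableEq V] where
  faces : Set (Finset V)
  nonempty_of_mem : ∀ {s : Finset V}, s ∈ faces → s.Nonempty
  down_closed : ∀ {s t : Finset V}, s ∈ faces → t ⊆ s → t.Nonempty → t ∈ faces

variable {V : Type} [DecidableEq V]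

/-- A primitive vector: a codimension-1 face pair of simplices of `K`. -/
def IsPrimitive (K : SComplex V) (p : Finset V × Finset V) : Prop :=
  p.1 ∈ K.faces ∧ p.2 ∈ K.faces ∧ p.1 ⊆ p.2 ∧ p.2.card = p.1.card + 1

/-- A discrete vector field on `K`. -/
def IsDVF (K : SComplex V) (W : Set (Finset V × Finset V)) : Prop :=
  (∀ p ∈ W, IsPrimitive K p) ∧
    ∀ p ∈ W, ∀ q ∈ W, p ≠ q →
      p.1 ≠ q.1 ∧ p.1 ≠ q.2 ∧ p.2 ≠ q.1 ∧ p.2 ≠ q.2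

/-- `W` admits a nontrivial closed `V`-path. -/
def HasClosedPath (W : Set (Finset V × Finset V)) : Prop :=
  ∃ (k : ℕ) (α β : ℕ → Finset V), 1 ≤ k ∧
    (∀ i < k, (α i, β i) ∈ W) ∧
    (∀ i < k, α (i + 1) ⊆ β i ∧ (β i).card = (α (i + 1)).card + 1 ∧ α (i + 1) ≠ α i) ∧
    α k = α 0

/-- A gradient vector field on `K`. -/
def IsGVF (K : SComplex V) (W : Set (Finset V × Finset V)) : Prop :=
  IsDVF K W ∧ ¬ HasClosedPath W

theorem IsGVF.mono {K : SComplex V} {W W' : Set (Finset V × Finset V)}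
    (h : IsGVF K W) (hsub : W' ⊆ W) : IsGVF K W' := by
  obtain ⟨⟨h1, h2⟩, h3⟩ := h
  refine ⟨⟨fun p hp => h1 p (hsub hp), fun p hp q hq hpq => h2 p (hsub hp) q (hsub hq) hpq⟩, ?_⟩
  rintro ⟨k, α, β, hk, hW, hrest, hclosed⟩
  exact h3 ⟨k, α, β, hk, fun i hi => hsub (hW i hi), hrest, hclosed⟩

/-- The vertices of the Morse complex of `K`: primitive vectors. -/
def MVert (K : SComplex V) : Type := {p : Finset V × Finset V // IsPrimitive K p}

instance (K : SComplex V) : DecidableEq (MVert K) :=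
  Subtype.instDecidableEq

/-- The Morse complex of `K`: simplices are gradient vector fields. -/
def morse (K : SComplex V) : SComplex (MVert K) where
  faces := {s : Finset (MVert K) | s.Nonempty ∧
    IsGVF K {p | ∃ x ∈ s, (x : {p : Finset V × Finset V // IsPrimitive K p}).val = p}}
  nonempty_of_mem := fun h => h.1
  down_closed := by
    rintro s t ⟨-, hgvf⟩ hts htne
    exact ⟨htne, hgvf.mono (by rintro p ⟨x, hx, rfl⟩; exact ⟨x, hts hx, rfl⟩)⟩

/-- The image of a primitive vector under a vertex map. -/
def indVert (e : V → V) (p : Finset V × Finset V) : Finset V × Finset V :=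
  (p.1.image e, p.2.image e)

/-- The automorphism group of a simplicial complex, as a subgroup of the
permutations of its vertex set. -/
def autK (K : SComplex V) : Subgroup (Equiv.Perm V) where
  carrier := {e | ∀ s : Finset V, s ∈ K.faces ↔ s.image e ∈ K.faces}
  one_mem' := by intro s; simp
  mul_mem' := by
    intro a b ha hb s
    rw [hb s]
    have : (s.image b).image a = s.image (a * b) := by
      rw [Finset.image_image]; rfl
    rw [ha (s.image b), this]
  inv_mem' := by
    intro a ha s
    have := ha (s.image ⇑(a⁻¹))
    have h2 : (s.image ⇑(a⁻¹)).image ⇑a = s := by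
      rw [Finset.image_image]
      simp [Function.comp_def]
    rw [h2] at this
    exact this.symm

/-- The Hasse diagram of `K`, as a simple graph on the simplices of `K`. -/
def hasse (K : SComplex V) : SimpleGraph {s : Finset V // s ∈ K.faces} where
  Adj σ τ := (σ.1 ⊆ τ.1 ∧ τ.1.card = σ.1.card + 1) ∨ (τ.1 ⊆ σ.1 ∧ σ.1.card = τ.1.card + 1)
  symm := by tauto
  loopless := ⟨by rintro σ (⟨-, h⟩ | ⟨-, h⟩) <;> omega⟩

/-- The automorphism group of a simple graph, as a subgroup of the permutations
of its vertex set. -/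
def autG {α : Type} (G : SimpleGraph α) : Subgroup (Equiv.Perm α) where
  carrier := {e | ∀ u v, G.Adj (e u) (e v) ↔ G.Adj u v}
  one_mem' := by intro u v; simp
  mul_mem' := by
    intro a b ha hb u v
    rw [show ((a * b : Equiv.Perm α) u) = a (b u) from rfl,
      show ((a * b : Equiv.Perm α) v) = a (b v) from rfl, ha, hb]
  inv_mem' := by
    intro a ha u v
    have := ha (a⁻¹ u) (a⁻¹ v)
    simpa using this.symm

/-- The cycle of length `n`, as a simplicial complex on `ZMod n`: its simplices
are the nonempty subsets of the edges `{i, i+1}`. -/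
def cycleComplex (n : ℕ) : SComplex (ZMod n) where
  faces := {s | s.Nonempty ∧ ∃ i : ZMod n, s ⊆ {i, i + 1}}
  nonempty_of_mem := fun h => h.1
  down_closed := by
    rintro s t ⟨-, i, hsub⟩ hts htne
    exact ⟨htne, i, hts.trans hsub⟩


namespace CycAux
open SimpleGraph Equiv DihedralGroup
open Fin.CommRing

lemma mem_autG_iff {α : Type} {G : SimpleGraph α} {e : Equiv.Perm α} :
    e ∈ autG G ↔ ∀ u v, G.Adj (e u) (e v) ↔ G.Adj u v := Iff.rfl

variable {m : ℕ}

def zf (m : ℕ) : ZMod (m + 2) ≃+* Fin (m + 2) :=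
  { toFun := fun x => x, invFun := fun x => x, left_inv := fun _ => rfl, right_inv := fun _ => rfl,
    map_mul' := fun _ _ => rfl, map_add' := fun _ _ => rfl }

lemma two_ne_zero' (hm : 1 ≤ m) : (2 : Fin (m + 2)) ≠ 0 := by
  intro h
  have h2 : ((2 : ℕ) : Fin (m + 2)) = 2 := by norm_cast
  have hv := congrArg Fin.val (h2.trans h)
  rw [Fin.val_natCast, Nat.mod_eq_of_lt (by omega)] at hv
  simp at hv

lemma rot_mem (c : Fin (m + 2)) : Equiv.subRight c ∈ autG (cycleGraph (m + 2)) := by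
  intro u v
  simp only [Equiv.subRight_apply, cycleGraph_adj]
  constructor
  · rintro (h | h)
    · left; rw [← h]; ring
    · right; rw [← h]; ring
  · rintro (h | h)
    · left; rw [← h]; ring
    · right; rw [← h]; ring

lemma refl_mem (c : Fin (m + 2)) : Equiv.subLeft c ∈ autG (cycleGraph (m + 2)) := by
  intro u v
  simp only [Equiv.subLeft_apply, cycleGraph_adj]
  constructor
  · rintro (h | h)
    · right; rw [← h]; ring
    · left; rw [← h]; ring
  · rintro (h | h)
    · right; rw [← h]; ring
    · left; rw [← h]; ring

lemma classify (hm : 1 ≤ m) (e : Equiv.Perm (Fin (m + 2)))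
    (he : e ∈ autG (cycleGraph (m + 2))) :
    (∀ x, e x = x + e 0) ∨ (∀ x, e x = e 0 - x) := by
  have h2 := two_ne_zero' hm
  set d : Fin (m + 2) := e 1 - e 0 with hd_def
  have adj01 : (cycleGraph (m + 2)).Adj (0 : Fin (m+2)) 1 := by
    rw [cycleGraph_adj]; right; rw [sub_zero]
  have hd : d = 1 ∨ d = -1 := by
    have h := (he 0 1).mpr adj01
    rw [cycleGraph_adj] at h
    rcases h with h | h
    · right
      have : e 1 - e 0 = -(e 0 - e 1) := by ring
      rw [hd_def, this, h]
    · left; exact h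
  have main : ∀ k : ℕ, e (k : Fin (m + 2)) = e 0 + (k : Fin (m+2)) * d ∧
      e ((k + 1 : ℕ) : Fin (m + 2)) = e 0 + ((k + 1 : ℕ) : Fin (m+2)) * d := by
    intro k
    induction k with
    | zero =>
      constructor
      · push_cast; ring_nf
      · push_cast; rw [hd_def]; ring
    | succ k ih =>
      refine ⟨ih.2, ?_⟩
      have adjk : (cycleGraph (m + 2)).Adj ((k+1 : ℕ) : Fin (m+2)) ((k+2 : ℕ) : Fin (m+2)) := by
        rw [cycleGraph_adj]; right; push_cast; ring
      have hadj := (he _ _).mpr adjk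
      rw [cycleGraph_adj] at hadj
      have hne : e ((k+2 : ℕ) : Fin (m+2)) ≠ e 0 + ((k:ℕ) : Fin (m+2)) * d := by
        rw [← ih.1]
        intro h
        have hk := e.injective h
        have h0 : ((k+2 : ℕ) : Fin (m+2)) - ((k : ℕ) : Fin (m+2)) = 0 := by rw [hk]; ring
        push_cast at h0
        apply h2
        calc (2 : Fin (m+2)) = (k : Fin (m+2)) + 2 - k := by ring
        _ = 0 := h0
      have hgoal : e ((k+2:ℕ) : Fin (m+2)) = e ((k+1:ℕ) : Fin (m+2)) + d ∨
          e ((k+2:ℕ) : Fin (m+2)) = e ((k+1:ℕ) : Fin (m+2)) - d := by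
        rcases hd with hd1 | hd1 <;> rcases hadj with h | h
        · right; rw [hd1, ← h]; ring
        · left; rw [hd1, ← h]; ring
        · left; rw [hd1, ← h]; ring
        · right; rw [hd1, ← h]; ring
      rcases hgoal with h | h
      · rw [h, ih.2]; push_cast; ring
      · exfalso
        apply hne
        rw [h, ih.2]; push_cast; ring
  have hall : ∀ x : Fin (m+2), e x = e 0 + x * d := by
    intro x
    have := (main x.val).1
    rwa [Fin.cast_val_eq_self] at this
  rcases hd with h | h
  · left; intro x; rw [hall x, h]; ring
  · right; intro x; rw [hall x, h]; ring

def dperm : DihedralGroup (m + 2) → Equiv.Perm (Fin (m + 2))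
  | .r i => Equiv.subRight (zf m i)
  | .sr i => Equiv.subLeft (zf m i)

lemma dperm_mul (a b : DihedralGroup (m + 2)) : dperm (a * b) = dperm a * dperm b := by
  rcases a with i | i <;> rcases b with j | j <;>
    · show dperm _ = _
      ext x
      simp only [dperm, r_mul_r, r_mul_sr, sr_mul_r, sr_mul_sr, map_add, map_sub,
        Equiv.Perm.mul_apply, Equiv.subRight_apply, Equiv.subLeft_apply]
      ring

def dihHom : DihedralGroup (m + 2) →* Equiv.Perm (Fin (m + 2)) where
  toFun := dperm
  map_one' := by
    show dperm (.r 0) = 1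
    ext x
    simp [dperm]
  map_mul' := dperm_mul

lemma dihHom_mem (g : DihedralGroup (m + 2)) : dihHom g ∈ autG (cycleGraph (m + 2)) := by
  rcases g with i | i
  · exact rot_mem _
  · exact refl_mem _

def dihToAut : DihedralGroup (m + 2) →* autG (cycleGraph (m + 2)) :=
  dihHom.codRestrict _ dihHom_mem

lemma dihToAut_bij (hm : 1 ≤ m) : Function.Bijective (dihToAut (m := m)) := by
  constructor
  · rw [injective_iff_map_eq_one]
    intro g hg
    have hg' : dperm g = 1 := congrArg Subtype.val hg
    rcases g with i | i
    · have h0 := congrArg (fun (p : Equiv.Perm (Fin (m+2))) => p 0) hg'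
      simp only [dperm, Equiv.subRight_apply, Equiv.Perm.one_apply, zero_sub] at h0
      have : zf m i = 0 := by
        have := congrArg Neg.neg h0
        simpa using this
      have : i = 0 := by
        have := congrArg (zf m).symm this
        simpa using this
      rw [this]; rfl
    · exfalso
      have h0 := congrArg (fun (p : Equiv.Perm (Fin (m+2))) => p 0) hg'
      have h1 := congrArg (fun (p : Equiv.Perm (Fin (m+2))) => p 1) hg'
      simp only [dperm, Equiv.subLeft_apply, Equiv.Perm.one_apply, sub_zero] at h0 h1
      apply two_ne_zero' hm
      have : (1 : Fin (m+2)) + 1 = 0 + 0 + 0 := by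
        nth_rewrite 1 [← h1]
        rw [h0]; ring
      calc (2 : Fin (m+2)) = 1 + 1 := by ring
      _ = 0 := by rw [this]; ring
  · rintro ⟨e, he⟩
    rcases classify hm e he with h | h
    · refine ⟨.r ((zf m).symm (- (e 0))), ?_⟩
      apply Subtype.ext
      show Equiv.subRight (zf m ((zf m).symm (-(e 0)))) = e
      ext x
      rw [Equiv.subRight_apply, (zf m).apply_symm_apply, h x]
      ring
    · refine ⟨.sr ((zf m).symm (e 0)), ?_⟩
      apply Subtype.ext
      show Equiv.subLeft (zf m ((zf m).symm (e 0))) = e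
      ext x
      rw [Equiv.subLeft_apply, (zf m).apply_symm_apply, h x]

noncomputable def partB (hm : 1 ≤ m) : DihedralGroup (m + 2) ≃* autG (SimpleGraph.cycleGraph (m + 2)) :=
  MulEquiv.ofBijective _ (dihToAut_bij hm)

end CycAux
namespace MorAux
open Finset
open Fin.CommRing

variable {n : ℕ}

lemma cast_inj_lt (hn : 3 ≤ n) {a b : ℕ} (ha : a < n) (hb : b < n)
    (h : (a : ZMod n) = b) : a = b := by
  haveI : NeZero n := ⟨by omega⟩
  rw [← ZMod.val_cast_of_lt ha, ← ZMod.val_cast_of_lt hb, h]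

lemma one_ne_zero' (hn : 3 ≤ n) : (1 : ZMod n) ≠ 0 := by
  intro h
  have := cast_inj_lt hn (a := 1) (b := 0) (by omega) (by omega) (by push_cast; exact h)
  omega

lemma two_ne_zero'' (hn : 3 ≤ n) : (2 : ZMod n) ≠ 0 := by
  intro h
  have := cast_inj_lt hn (a := 2) (b := 0) (by omega) (by omega) (by push_cast; exact h)
  omega

lemma succ_ne_self (hn : 3 ≤ n) (x : ZMod n) : x + 1 ≠ x := by
  intro h
  exact one_ne_zero' hn (by linear_combination h)

lemma edge_eq_iff (hn : 3 ≤ n) (a b : ZMod n) :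
    ({a, a + 1} : Finset (ZMod n)) = {b, b + 1} ↔ a = b := by
  constructor
  · intro h
    have ha : a ∈ ({b, b + 1} : Finset (ZMod n)) := by rw [← h]; simp
    have ha1 : a + 1 ∈ ({b, b + 1} : Finset (ZMod n)) := by rw [← h]; simp
    simp only [mem_insert, mem_singleton] at ha ha1
    rcases ha with h1 | h1
    · exact h1
    · exfalso
      rcases ha1 with h2 | h2
      · exact two_ne_zero'' hn (by linear_combination h2 - h1)
      · exact one_ne_zero' hn (by linear_combination h2 - h1)
  · rintro rfl; rfl

/-- the `j`-th primitive vector of the cycle complex, `j < 2n`. -/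
def arV (n j : ℕ) : Finset (ZMod n) := {(↑(j / 2) + ↑(j % 2) : ZMod n)}

def arE (n j : ℕ) : Finset (ZMod n) := {(↑(j / 2) : ZMod n), (↑(j / 2) : ZMod n) + 1}

def ar (n j : ℕ) : Finset (ZMod n) × Finset (ZMod n) := (arV n j, arE n j)

lemma card_arE (hn : 3 ≤ n) (j : ℕ) : (arE n j).card = 2 := by
  rw [arE, card_insert_of_notMem ?_, card_singleton]
  simp only [Finset.mem_singleton]
  intro hh
  exact succ_ne_self hn _ hh.symm


lemma mem_faces_iff (s : Finset (ZMod n)) :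
    s ∈ (cycleComplex n).faces ↔ s.Nonempty ∧ ∃ i : ZMod n, s ⊆ {i, i + 1} := Iff.rfl

lemma castval (hn : 3 ≤ n) (x : ZMod n) : ((x.val : ℕ) : ZMod n) = x := by
  haveI : NeZero n := ⟨by omega⟩
  exact ZMod.natCast_rightInverse x

lemma val_lt' (hn : 3 ≤ n) (x : ZMod n) : x.val < n := by
  haveI : NeZero n := ⟨by omega⟩
  exact ZMod.val_lt x

lemma arV_def (j : ℕ) : arV n j = {(↑(j / 2) + ↑(j % 2) : ZMod n)} := rfl
lemma arE_def (j : ℕ) : arE n j = {(↑(j / 2) : ZMod n), (↑(j / 2) : ZMod n) + 1} := rfl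
lemma ar_fst (j : ℕ) : (ar n j).1 = arV n j := rfl
lemma ar_snd (j : ℕ) : (ar n j).2 = arE n j := rfl

lemma arV_even (hn : 3 ≤ n) {j : ℕ} (h : j % 2 = 0) : arV n j = {(↑(j / 2) : ZMod n)} := by
  rw [arV_def, h]; push_cast; rw [add_zero]

lemma arV_odd (hn : 3 ≤ n) {j : ℕ} (h : j % 2 = 1) : arV n j = {(↑(j / 2) : ZMod n) + 1} := by
  rw [arV_def, h]; push_cast; rfl

lemma prim_ar (hn : 3 ≤ n) (j : ℕ) : IsPrimitive (cycleComplex n) (ar n j) := by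
  refine ⟨?_, ?_, ?_, ?_⟩
  · refine ⟨singleton_nonempty _, ⟨(↑(j / 2) : ZMod n), ?_⟩⟩
    show arV n j ⊆ _
    rcases Nat.mod_two_eq_zero_or_one j with h | h
    · rw [arV_even hn h, singleton_subset_iff]; simp
    · rw [arV_odd hn h, singleton_subset_iff]; simp
  · exact ⟨⟨_, mem_insert_self _ _⟩, ⟨(↑(j / 2) : ZMod n), Finset.Subset.rfl⟩⟩
  · show arV n j ⊆ arE n j
    rw [arE_def]
    rcases Nat.mod_two_eq_zero_or_one j with h | h
    · rw [arV_even hn h, singleton_subset_iff]; simp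
    · rw [arV_odd hn h, singleton_subset_iff]; simp
  · show (arE n j).card = (arV n j).card + 1
    rw [card_arE hn, arV_def, card_singleton]

lemma prim_iff (hn : 3 ≤ n) (p : Finset (ZMod n) × Finset (ZMod n)) :
    IsPrimitive (cycleComplex n) p ↔ ∃ j, j < 2 * n ∧ ar n j = p := by
  constructor
  · rintro ⟨⟨hne1, i1, hsub1⟩, ⟨hne2, i, hsub2⟩, hsub, hcard⟩
    have hc2 : p.2.card ≤ 2 := by
      calc p.2.card ≤ ({i, i+1} : Finset (ZMod n)).card := card_le_card hsub2
      _ ≤ 2 := (card_insert_le _ _).trans (by simp)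
    have hc1 : 1 ≤ p.1.card := card_pos.mpr hne1
    have hcc : p.1.card = 1 ∧ p.2.card = 2 := by omega
    have hedge : p.2 = {i, i + 1} := by
      apply eq_of_subset_of_card_le hsub2
      rw [hcc.2]
      exact (card_insert_le _ _).trans (by simp)
    obtain ⟨v, hv⟩ := card_eq_one.mp hcc.1
    have hvmem : v ∈ ({i, i+1} : Finset (ZMod n)) := by
      rw [← hedge]; exact hsub (by rw [hv]; simp)
    simp only [mem_insert, mem_singleton] at hvmem
    rcases hvmem with hvi | hvi
    · refine ⟨2 * i.val, by have := val_lt' hn i; omega, ?_⟩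
      have hdiv : (2 * i.val) / 2 = i.val := by omega
      have hmod : (2 * i.val) % 2 = 0 := by omega
      apply Prod.ext
      · rw [ar_fst, arV_even hn hmod, hdiv, castval hn, hv, hvi]
      · rw [ar_snd, arE_def, hdiv, castval hn, hedge]
    · refine ⟨2 * i.val + 1, by have := val_lt' hn i; omega, ?_⟩
      have hdiv : (2 * i.val + 1) / 2 = i.val := by omega
      have hmod : (2 * i.val + 1) % 2 = 1 := by omega
      apply Prod.ext
      · rw [ar_fst, arV_odd hn hmod, hdiv, castval hn, hv, hvi]
      · rw [ar_snd, arE_def, hdiv, castval hn, hedge]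
  · rintro ⟨j, -, rfl⟩
    exact prim_ar hn j

lemma ar_inj (hn : 3 ≤ n) {j j' : ℕ} (hj : j < 2 * n) (hj' : j' < 2 * n)
    (h : ar n j = ar n j') : j = j' := by
  rw [Prod.ext_iff] at h
  obtain ⟨h1, h2⟩ := h
  rw [ar_snd, ar_snd, arE_def, arE_def] at h2
  have hdiv : j / 2 = j' / 2 := by
    apply cast_inj_lt hn (by omega) (by omega)
    exact (edge_eq_iff hn _ _).mp h2
  rw [ar_fst, ar_fst, arV_def, arV_def, hdiv] at h1
  have h1' : ((j % 2 : ℕ) : ZMod n) = ((j' % 2 : ℕ) : ZMod n) :=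
    add_left_cancel (Finset.singleton_injective h1)
  have hmod : j % 2 = j' % 2 := cast_inj_lt hn (by omega) (by omega) h1'
  omega

def Nxt (n x y : ℕ) : Prop := x + 1 = y ∨ (x = 2 * n - 1 ∧ y = 0)

lemma nxt_oneway (hn : 3 ≤ n) {x y : ℕ} (hx : x < 2 * n) (hy : y < 2 * n)
    (h : Nxt n x y) : arV n x = arV n y ∨ arE n x = arE n y := by
  haveI : NeZero n := ⟨by omega⟩
  rcases h with h | ⟨h1, h2⟩
  · rcases Nat.mod_two_eq_zero_or_one x with hp | hp
    · right
      rw [arE_def, arE_def]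
      have : y / 2 = x / 2 := by omega
      rw [this]
    · left
      rw [arV_odd hn hp, arV_even hn (by omega)]
      have : y / 2 = x / 2 + 1 := by omega
      rw [this]
      push_cast
      rfl
  · left
    have hp : x % 2 = 1 := by omega
    have hd : x / 2 = n - 1 := by omega
    rw [arV_odd hn hp, arV_even hn (by omega : y % 2 = 0), hd, h2]
    have : ((n - 1 : ℕ) : ZMod n) + 1 = ((n - 1 + 1 : ℕ) : ZMod n) := by push_cast; ring
    rw [this]
    have h3 : n - 1 + 1 = n := by omega
    rw [h3, ZMod.natCast_self]
    norm_num

lemma confN (hn : 3 ≤ n) {x y : ℕ} (hx : x < 2 * n) (hy : y < 2 * n) (hxy : x ≠ y) :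
    (arV n x = arV n y ∨ arE n x = arE n y) ↔ (Nxt n x y ∨ Nxt n y x) := by
  haveI : NeZero n := ⟨by omega⟩
  constructor
  · rintro (h | h)
    · rcases Nat.mod_two_eq_zero_or_one x with hp | hp <;>
        rcases Nat.mod_two_eq_zero_or_one y with hq | hq
      · exfalso
        rw [arV_even hn hp, arV_even hn hq] at h
        have := cast_inj_lt hn (by omega) (by omega) (Finset.singleton_injective h)
        omega
      · -- x even, y odd : x = y + 1 or wrap (y = 2n-1, x = 0)
        rw [arV_even hn hp, arV_odd hn hq] at h
        have h' : ((x / 2 : ℕ) : ZMod n) = ((y / 2 + 1 : ℕ) : ZMod n) := by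
          push_cast
          exact Finset.singleton_injective h
        rcases Nat.lt_or_ge (y / 2 + 1) n with hlt | hge
        · have := cast_inj_lt hn (by omega) hlt h'
          right; left; omega
        · have hy2 : y / 2 + 1 = n := by omega
          rw [hy2, ZMod.natCast_self] at h'
          have : x / 2 = 0 := by
            apply cast_inj_lt hn (by omega) (by omega)
            rw [h']; norm_num
          right; right
          constructor <;> omega
      · rw [arV_odd hn hp, arV_even hn hq] at h
        have h' : ((x / 2 + 1 : ℕ) : ZMod n) = ((y / 2 : ℕ) : ZMod n) := by
          push_cast
          exact Finset.singleton_injective h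
        rcases Nat.lt_or_ge (x / 2 + 1) n with hlt | hge
        · have := cast_inj_lt hn hlt (by omega) h'
          left; left; omega
        · have hx2 : x / 2 + 1 = n := by omega
          rw [hx2, ZMod.natCast_self] at h'
          have : y / 2 = 0 := by
            apply cast_inj_lt hn (by omega) (by omega)
            rw [← h']; norm_num
          left; right
          constructor <;> omega
      · exfalso
        rw [arV_odd hn hp, arV_odd hn hq] at h
        have h2 := Finset.singleton_injective h
        have := cast_inj_lt hn (by omega) (by omega)
          (add_right_cancel (b := (1 : ZMod n)) h2)
        omega
    · rw [arE_def, arE_def] at h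
      have := cast_inj_lt hn (by omega) (by omega) ((edge_eq_iff hn _ _).mp h)
      unfold Nxt
      omega
  · rintro (h | h)
    · exact nxt_oneway hn hx hy h
    · rcases nxt_oneway hn hy hx h with h' | h'
      · exact Or.inl h'.symm
      · exact Or.inr h'.symm

variable {m : ℕ}

lemma adj_iff_nxt (hm : 2 * n = m + 2) (u v : Fin (m + 2)) :
    (SimpleGraph.cycleGraph (m + 2)).Adj u v ↔ (Nxt n u.val v.val ∨ Nxt n v.val u.val) := by
  have key : ∀ a b : Fin (m + 2), (b - a = 1) ↔ Nxt n a.val b.val := by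
    intro a b
    rw [sub_eq_iff_eq_add, ← Fin.val_eq_val, Fin.val_add, Fin.val_one]
    rcases Nat.lt_or_ge (a.val + 1) (m + 2) with hlt | hge
    · rw [Nat.add_comm 1 a.val, Nat.mod_eq_of_lt hlt]
      unfold Nxt
      have := a.is_lt
      have := b.is_lt
      omega
    · have ha : a.val = m + 1 := by have := a.is_lt; omega
      rw [Nat.add_comm 1 a.val, ha]
      have : (m + 1 + 1) % (m + 2) = 0 := by
        rw [Nat.mod_self]
      rw [this]
      unfold Nxt
      have := b.is_lt
      omega
  rw [SimpleGraph.cycleGraph_adj]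
  rw [key v u, key u v]
  tauto

lemma conf_adj (hn : 3 ≤ n) (hm : 2 * n = m + 2) {u v : Fin (m + 2)} (huv : u ≠ v) :
    (arV n u.val = arV n v.val ∨ arE n u.val = arE n v.val) ↔
      (SimpleGraph.cycleGraph (m + 2)).Adj u v := by
  rw [adj_iff_nxt hm]
  exact confN hn (by have := u.is_lt; omega) (by have := v.is_lt; omega)
    (fun h => huv (Fin.ext h))

/-- the arrow set associated to an index set. -/
def Wt (n : ℕ) (m : ℕ) (t : Finset (Fin (m + 2))) : Set (Finset (ZMod n) × Finset (ZMod n)) :=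
  {p | ∃ j ∈ t, ar n j.val = p}

def EvF (m : ℕ) : Finset (Fin (m + 2)) := Finset.univ.filter (fun j => j.val % 2 = 0)
def OdF (m : ℕ) : Finset (Fin (m + 2)) := Finset.univ.filter (fun j => j.val % 2 = 1)

def Indep (m : ℕ) (t : Finset (Fin (m + 2))) : Prop :=
  ∀ u ∈ t, ∀ v ∈ t, ¬ (SimpleGraph.cycleGraph (m + 2)).Adj u v

def Good (m : ℕ) (t : Finset (Fin (m + 2))) : Prop :=
  t.Nonempty ∧ Indep m t ∧ t ≠ EvF m ∧ t ≠ OdF m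

lemma dvf_iff (hn : 3 ≤ n) (hm : 2 * n = m + 2) (t : Finset (Fin (m + 2))) :
    IsDVF (cycleComplex n) (Wt n m t) ↔ Indep m t := by
  constructor
  · intro h u hu v hv hadj
    have hne : u ≠ v := hadj.ne
    have hpq : ar n u.val ≠ ar n v.val := by
      intro hh
      exact hne (Fin.ext (ar_inj hn (by have := u.is_lt; omega) (by have := v.is_lt; omega) hh))
    have h4 := h.2 _ ⟨u, hu, rfl⟩ _ ⟨v, hv, rfl⟩ hpq
    rcases (conf_adj hn hm hne).mpr hadj with hc | hc
    · exact h4.1 hc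
    · exact h4.2.2.2 hc
  · intro hind
    constructor
    · rintro p ⟨j, hj, rfl⟩
      exact prim_ar hn j.val
    · rintro p ⟨u, hu, rfl⟩ q ⟨v, hv, rfl⟩ hpq
      have hne : u ≠ v := by rintro rfl; exact hpq rfl
      have hnc : ¬ (arV n u.val = arV n v.val ∨ arE n u.val = arE n v.val) := by
        intro hc
        exact hind u hu v hv ((conf_adj hn hm hne).mp hc)
      refine ⟨fun h => hnc (Or.inl h), ?_, ?_, fun h => hnc (Or.inr h)⟩
      · intro h
        have := congrArg Finset.card h
        rw [show (ar n u.val).1 = arV n u.val from rfl, show (ar n v.val).2 = arE n v.val from rfl,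
          arV_def, card_singleton, card_arE hn] at this
        omega
      · intro h
        have := congrArg Finset.card h
        rw [show (ar n u.val).2 = arE n u.val from rfl, show (ar n v.val).1 = arV n v.val from rfl,
          arV_def, card_singleton, card_arE hn] at this
        omega

lemma pair_card (hn : 3 ≤ n) (c : ZMod n) : ({c, c + 1} : Finset (ZMod n)).card = 2 := by
  rw [card_insert_of_notMem ?_, card_singleton]
  simp only [Finset.mem_singleton]
  intro hh
  exact succ_ne_self hn _ hh.symm

lemma closed_ev (hn : 3 ≤ n) (hm : 2 * n = m + 2) {t : Finset (Fin (m + 2))}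
    (hsub : EvF m ⊆ t) : HasClosedPath (Wt n m t) := by
  haveI : NeZero n := ⟨by omega⟩
  refine ⟨n, fun i => ({((i : ℕ) : ZMod n)} : Finset (ZMod n)),
    fun i => ({((i : ℕ) : ZMod n), ((i : ℕ) : ZMod n) + 1} : Finset (ZMod n)), by omega, ?_, ?_, ?_⟩
  · intro i hi
    dsimp only
    refine ⟨⟨2 * i, by omega⟩, hsub ?_, ?_⟩
    · rw [EvF, mem_filter]
      exact ⟨mem_univ _, by show 2 * i % 2 = 0; omega⟩
    · have hdiv : (2 * i) / 2 = i := by omega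
      apply Prod.ext
      · show arV n ((⟨2 * i, by omega⟩ : Fin (m+2)).val) = _
        rw [show (⟨2 * i, by omega⟩ : Fin (m+2)).val = 2 * i from rfl,
          arV_even hn (by omega), hdiv]
      · show arE n _ = _
        rw [show (⟨2 * i, by omega⟩ : Fin (m+2)).val = 2 * i from rfl, arE_def, hdiv]
  · intro i hi
    dsimp only
    refine ⟨?_, ?_, ?_⟩
    · rw [singleton_subset_iff]
      push_cast
      simp
    · rw [pair_card hn, card_singleton]
    · intro h
      have h2 := Finset.singleton_injective h
      push_cast at h2
      exact succ_ne_self hn _ h2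
  · show ({((n : ℕ) : ZMod n)} : Finset (ZMod n)) = {((0 : ℕ) : ZMod n)}
    rw [ZMod.natCast_self]
    norm_num

lemma closed_od (hn : 3 ≤ n) (hm : 2 * n = m + 2) {t : Finset (Fin (m + 2))}
    (hsub : OdF m ⊆ t) : HasClosedPath (Wt n m t) := by
  haveI : NeZero n := ⟨by omega⟩
  refine ⟨n, fun i => ({-((i : ℕ) : ZMod n)} : Finset (ZMod n)),
    fun i => ({-((i : ℕ) : ZMod n) - 1, -((i : ℕ) : ZMod n)} : Finset (ZMod n)),
    by omega, ?_, ?_, ?_⟩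
  · intro i hi
    dsimp only
    set c : ZMod n := -((i : ℕ) : ZMod n) - 1 with hc
    refine ⟨⟨2 * c.val + 1, by have := val_lt' hn c; omega⟩, hsub ?_, ?_⟩
    · rw [OdF, mem_filter]
      exact ⟨mem_univ _, by show (2 * c.val + 1) % 2 = 1; omega⟩
    · have hdiv : (2 * c.val + 1) / 2 = c.val := by omega
      apply Prod.ext
      · show arV n _ = _
        rw [show (⟨2 * c.val + 1, by have := val_lt' hn c; omega⟩ : Fin (m+2)).val
            = 2 * c.val + 1 from rfl, arV_odd hn (by omega), hdiv, castval hn]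
        congr 1
        rw [hc]; ring
      · show arE n _ = _
        rw [show (⟨2 * c.val + 1, by have := val_lt' hn c; omega⟩ : Fin (m+2)).val
            = 2 * c.val + 1 from rfl, arE_def, hdiv, castval hn]
        rw [hc]
        congr 1
        ring
  · intro i hi
    dsimp only
    refine ⟨?_, ?_, ?_⟩
    · rw [singleton_subset_iff, mem_insert]
      left
      push_cast
      ring
    · rw [card_insert_of_notMem ?_, card_singleton, card_singleton]
      intro h
      rw [Finset.mem_singleton] at h
      apply one_ne_zero' hn
      linear_combination -h
    · intro h
      have h2 := Finset.singleton_injective h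
      push_cast at h2
      apply one_ne_zero' hn
      linear_combination -h2
  · show ({-((n : ℕ) : ZMod n)} : Finset (ZMod n)) = {-((0 : ℕ) : ZMod n)}
    rw [ZMod.natCast_self]
    norm_num

lemma sing_inj {a b : ZMod n} (h : ({a} : Finset (ZMod n)) = {b}) : a = b :=
  Finset.singleton_injective h

lemma path_to_orient (hn : 3 ≤ n) (hm : 2 * n = m + 2) {t : Finset (Fin (m + 2))}
    (hdvf : IsDVF (cycleComplex n) (Wt n m t)) (hp : HasClosedPath (Wt n m t)) :
    t = EvF m ∨ t = OdF m := by
  haveI : NeZero n := ⟨by omega⟩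
  obtain ⟨k, α, β, hk, hmem, hstep, hcyc⟩ := hp
  have hsh : ∀ i, i < k → ∃ v w : ZMod n, α i = {v} ∧ α (i+1) = {w} ∧ β i = {v, w} ∧
      (w = v + 1 ∨ v = w + 1) := by
    intro i hi
    obtain ⟨j, hj, hji⟩ := hmem i hi
    have hα : α i = arV n j.val := (congrArg Prod.fst hji).symm
    have hβ : β i = arE n j.val := (congrArg Prod.snd hji).symm
    obtain ⟨hsub, hcard, hne⟩ := hstep i hi
    have hcard2 : (β i).card = 2 := by rw [hβ, card_arE hn]
    have hcard1 : (α (i+1)).card = 1 := by omega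
    obtain ⟨w, hw⟩ := card_eq_one.mp hcard1
    set c : ZMod n := ((j.val / 2 : ℕ) : ZMod n) with hc
    have hβ' : β i = {c, c + 1} := by rw [hβ, arE_def]
    have hwmem : w = c ∨ w = c + 1 := by
      have : w ∈ ({c, c+1} : Finset (ZMod n)) := by
        rw [← hβ']
        exact hsub (by rw [hw]; simp)
      simpa using this
    rcases Nat.mod_two_eq_zero_or_one j.val with hpar | hpar
    · have hαc : α i = {c} := by rw [hα, arV_even hn hpar]
      have hwne : w ≠ c := by
        intro h
        apply hne
        rw [hw, hαc, h]
      have hw1 : w = c + 1 := by tauto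
      exact ⟨c, w, hαc, hw, by rw [hβ', hw1], Or.inl hw1⟩
    · have hαc : α i = {c + 1} := by rw [hα, arV_odd hn hpar]
      have hwne : w ≠ c + 1 := by
        intro h
        apply hne
        rw [hw, hαc, h]
      have hw1 : w = c := by tauto
      refine ⟨c + 1, w, hαc, hw, ?_, Or.inr (by rw [hw1])⟩
      rw [hβ', hw1]
      exact Finset.pair_comm c (c + 1)
  have key : ∀ i, i < k → i + 1 < k →
      ∀ v w z : ZMod n, α i = {v} → α (i+1) = {w} → α (i+2) = {z} → v ≠ w →
      β i = {v, w} → β (i+1) = {w, z} → z ≠ v := by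
    intro i hi hi1 v w z hv hw hz hvw hb1 hb2 hzv
    have hpne : ((α i, β i) : Finset (ZMod n) × Finset (ZMod n)) ≠ (α (i+1), β (i+1)) := by
      intro h
      have h1 := congrArg Prod.fst h
      simp only [] at h1
      rw [hv, hw] at h1
      exact hvw (sing_inj h1)
    have h4 := hdvf.2 _ (hmem i hi) _ (hmem (i+1) hi1) hpne
    apply h4.2.2.2
    show β i = β (i + 1)
    rw [hb1, hb2, hzv, Finset.pair_comm]
  obtain ⟨v0, w0, hv0, hw0, hβ0, hd0⟩ := hsh 0 hk
  -- the two directional cases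
  rcases hd0 with hf0 | hb0
  · -- forward case: t = EvF
    have F : ∀ i, i < k → ∀ v w : ZMod n, α i = {v} → α (i+1) = {w} → w = v + 1 := by
      intro i
      induction i with
      | zero =>
        intro hi v w hv hw
        have h1 : v = v0 := sing_inj (hv.symm.trans hv0)
        have h2 : w = w0 := sing_inj (hw.symm.trans hw0)
        rw [h1, h2, hf0]
      | succ i ih =>
        intro hi v w hv hw
        have hik : i < k := by omega
        obtain ⟨v1, w1, hv1, hw1, hβ1, hd1⟩ := hsh i hik
        obtain ⟨v2, w2, hv2, hw2, hβ2, hd2⟩ := hsh (i+1) hi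
        have hdi : w1 = v1 + 1 := ih hik v1 w1 hv1 hw1
        have hvw1 : v = w1 := sing_inj (hv.symm.trans hw1)
        have hvv2 : v = v2 := sing_inj (hv.symm.trans hv2)
        have hww2 : w = w2 := sing_inj (hw.symm.trans hw2)
        have hvw : v ≠ w := by
          intro h
          apply (hstep (i+1) hi).2.2
          rw [hw, hv, h]
        have hzv : w ≠ v1 := by
          apply key i hik hi v1 v w hv1 hv hw
          · intro h
            apply succ_ne_self hn v1
            rw [← hdi, ← hvw1, ← h]
          · rw [hβ1, hvw1]
          · rw [hβ2, hvv2, hww2]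
        rcases hd2 with h | h
        · rw [hww2, h, hvv2]
        · exfalso
          apply hzv
          have hvv1 : v2 = v1 + 1 := by rw [← hvv2, hvw1, hdi]
          linear_combination hww2 + hvv1 - h
    have hval : ∀ i, i ≤ k → α i = {v0 + ((i : ℕ) : ZMod n)} := by
      intro i
      induction i with
      | zero => intro _; rw [hv0]; norm_num
      | succ i ih =>
        intro hi
        have hik : i < k := by omega
        obtain ⟨v1, w1, hv1, hw1, hβ1, hd1⟩ := hsh i hik
        have hdir := F i hik v1 w1 hv1 hw1
        have hv1val : v1 = v0 + ((i:ℕ) : ZMod n) := sing_inj (hv1.symm.trans (ih (by omega)))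
        rw [hw1, hdir, hv1val]
        congr 1
        push_cast
        ring
    have hkn : n ≤ k := by
      have h0 : α k = {v0 + ((k:ℕ) : ZMod n)} := hval k le_rfl
      rw [hcyc, hv0] at h0
      have hz : ((k:ℕ) : ZMod n) = 0 := by
        have := sing_inj h0
        linear_combination -this
      exact Nat.le_of_dvd (by omega) ((ZMod.natCast_eq_zero_iff k n).mp hz)
    have hcov : ∀ u : ZMod n, (({u}, {u, u + 1}) : Finset (ZMod n) × Finset (ZMod n)) ∈ Wt n m t := by
      intro u
      have hik : (u - v0).val < k := lt_of_lt_of_le (val_lt' hn _) hkn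
      obtain ⟨v1, w1, hv1, hw1, hβ1, hd1⟩ := hsh _ hik
      have hvu : v1 = u := by
        have h1 : v1 = v0 + (((u - v0).val : ℕ) : ZMod n) :=
          sing_inj (hv1.symm.trans (hval _ (le_of_lt hik)))
        rw [h1, castval hn]
        ring
      have hdir := F _ hik v1 w1 hv1 hw1
      have hmm := hmem _ hik
      rwa [hv1, hβ1, hdir, hvu] at hmm
    left
    apply Finset.ext
    intro j
    rw [EvF, mem_filter]
    constructor
    · intro hj
      refine ⟨mem_univ _, ?_⟩
      by_contra hodd
      have hpar : j.val % 2 = 1 := by omega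
      set c : ZMod n := ((j.val / 2 : ℕ) : ZMod n) with hc
      have hq : ar n j.val ∈ Wt n m t := ⟨j, hj, rfl⟩
      have hqq : ar n j.val = ({c + 1}, {c, c + 1}) := by
        apply Prod.ext
        · show arV n j.val = _
          rw [arV_odd hn hpar]
        · show arE n j.val = _
          rw [arE_def]
      have hcp := hcov (c + 1)
      have hne : (({c + 1}, {c + 1, c + 1 + 1}) : Finset (ZMod n) × Finset (ZMod n))
          ≠ ar n j.val := by
        intro h
        rw [hqq] at h
        have h2 := congrArg Prod.snd h
        simp only [] at h2
        have h3 : c + 1 = c := (edge_eq_iff hn _ _).mp h2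
        exact succ_ne_self hn c h3
      have h4 := hdvf.2 _ hcp _ hq hne
      apply h4.1
      rw [hqq]
    · rintro ⟨-, hpar⟩
      set c : ZMod n := ((j.val / 2 : ℕ) : ZMod n) with hc
      obtain ⟨j', hj', hj'eq⟩ := hcov c
      have hq : ar n j.val = ({c}, {c, c + 1}) := by
        apply Prod.ext
        · show arV n j.val = _
          rw [arV_even hn hpar]
        · show arE n j.val = _
          rw [arE_def]
      have : j' = j := by
        apply Fin.ext
        apply ar_inj hn (by have := j'.is_lt; omega) (by have := j.is_lt; omega)
        rw [hj'eq, hq]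
      rwa [this] at hj'
  · -- backward case: t = OdF
    have B : ∀ i, i < k → ∀ v w : ZMod n, α i = {v} → α (i+1) = {w} → v = w + 1 := by
      intro i
      induction i with
      | zero =>
        intro hi v w hv hw
        have h1 : v = v0 := sing_inj (hv.symm.trans hv0)
        have h2 : w = w0 := sing_inj (hw.symm.trans hw0)
        rw [h1, h2, hb0]
      | succ i ih =>
        intro hi v w hv hw
        have hik : i < k := by omega
        obtain ⟨v1, w1, hv1, hw1, hβ1, hd1⟩ := hsh i hik
        obtain ⟨v2, w2, hv2, hw2, hβ2, hd2⟩ := hsh (i+1) hi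
        have hdi : v1 = w1 + 1 := ih hik v1 w1 hv1 hw1
        have hvw1 : v = w1 := sing_inj (hv.symm.trans hw1)
        have hvv2 : v = v2 := sing_inj (hv.symm.trans hv2)
        have hww2 : w = w2 := sing_inj (hw.symm.trans hw2)
        have hvw : v ≠ w := by
          intro h
          apply (hstep (i+1) hi).2.2
          rw [hw, hv, h]
        have hzv : w ≠ v1 := by
          apply key i hik hi v1 v w hv1 hv hw
          · intro h
            apply succ_ne_self hn v
            calc v + 1 = w1 + 1 := by rw [hvw1]
            _ = v1 := hdi.symm
            _ = v := h
          · rw [hβ1, hvw1]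
          · rw [hβ2, hvv2, hww2]
        rcases hd2 with h | h
        · exfalso
          apply hzv
          have hv1v : v1 = v + 1 := by rw [hvw1]; exact hdi
          linear_combination hww2 + h - hvv2 - hv1v
        · rw [hww2, ← h]
          exact hvv2
    have hval : ∀ i, i ≤ k → α i = {v0 - ((i : ℕ) : ZMod n)} := by
      intro i
      induction i with
      | zero => intro _; rw [hv0]; norm_num
      | succ i ih =>
        intro hi
        have hik : i < k := by omega
        obtain ⟨v1, w1, hv1, hw1, hβ1, hd1⟩ := hsh i hik
        have hdir := B i hik v1 w1 hv1 hw1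
        have hv1val : v1 = v0 - ((i:ℕ) : ZMod n) := sing_inj (hv1.symm.trans (ih (by omega)))
        have hwv : w1 = v0 - (((i+1 : ℕ)) : ZMod n) := by
          have : w1 = v1 - 1 := by linear_combination -hdir
          rw [this, hv1val]
          push_cast
          ring
        rw [hw1, hwv]
    have hkn : n ≤ k := by
      have h0 : α k = {v0 - ((k:ℕ) : ZMod n)} := hval k le_rfl
      rw [hcyc, hv0] at h0
      have hz : ((k:ℕ) : ZMod n) = 0 := by
        have := sing_inj h0
        linear_combination this
      exact Nat.le_of_dvd (by omega) ((ZMod.natCast_eq_zero_iff k n).mp hz)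
    have hcov : ∀ u : ZMod n, (({u}, {u - 1, u}) : Finset (ZMod n) × Finset (ZMod n)) ∈ Wt n m t := by
      intro u
      have hik : (v0 - u).val < k := lt_of_lt_of_le (val_lt' hn _) hkn
      obtain ⟨v1, w1, hv1, hw1, hβ1, hd1⟩ := hsh _ hik
      have hvu : v1 = u := by
        have h1 : v1 = v0 - (((v0 - u).val : ℕ) : ZMod n) :=
          sing_inj (hv1.symm.trans (hval _ (le_of_lt hik)))
        rw [h1, castval hn]
        ring
      have hdir := B _ hik v1 w1 hv1 hw1
      have hw1u : w1 = u - 1 := by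
        rw [hvu] at hdir
        linear_combination -hdir
      have hmm := hmem _ hik
      rwa [hv1, hβ1, hvu, hw1u, Finset.pair_comm] at hmm
    right
    apply Finset.ext
    intro j
    rw [OdF, mem_filter]
    constructor
    · intro hj
      refine ⟨mem_univ _, ?_⟩
      by_contra hodd
      have hpar : j.val % 2 = 0 := by omega
      set c : ZMod n := ((j.val / 2 : ℕ) : ZMod n) with hc
      have hq : ar n j.val ∈ Wt n m t := ⟨j, hj, rfl⟩
      have hqq : ar n j.val = ({c}, {c, c + 1}) := by
        apply Prod.ext
        · show arV n j.val = _
          rw [arV_even hn hpar]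
        · show arE n j.val = _
          rw [arE_def]
      have hcp := hcov c
      have hne : (({c}, {c - 1, c}) : Finset (ZMod n) × Finset (ZMod n)) ≠ ar n j.val := by
        intro h
        rw [hqq] at h
        have h2 := congrArg Prod.snd h
        simp only [] at h2
        have h2' : ({c - 1, c - 1 + 1} : Finset (ZMod n)) = {c, c + 1} := by
          rw [show c - 1 + 1 = c by ring]
          exact h2
        have h3 : c - 1 = c := (edge_eq_iff hn _ _).mp h2'
        apply one_ne_zero' hn
        linear_combination -h3
      have h4 := hdvf.2 _ hcp _ hq hne
      apply h4.1
      rw [hqq]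
    · rintro ⟨-, hpar⟩
      set c : ZMod n := ((j.val / 2 : ℕ) : ZMod n) with hc
      obtain ⟨j', hj', hj'eq⟩ := hcov (c + 1)
      have hq : ar n j.val = ({c + 1}, {c + 1 - 1, c + 1}) := by
        apply Prod.ext
        · show arV n j.val = _
          rw [arV_odd hn hpar]
        · show arE n j.val = _
          rw [arE_def, show c + 1 - 1 = c by ring]
      have : j' = j := by
        apply Fin.ext
        apply ar_inj hn (by have := j'.is_lt; omega) (by have := j.is_lt; omega)
        rw [hj'eq, hq]
      rwa [this] at hj'

def fArr (hn : 3 ≤ n) (hm : 2 * n = m + 2) : Fin (m + 2) → MVert (cycleComplex n) :=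
  fun j => ⟨ar n j.val, prim_ar hn j.val⟩

lemma fArr_bij (hn : 3 ≤ n) (hm : 2 * n = m + 2) : Function.Bijective (fArr (m := m) hn hm) := by
  constructor
  · intro j j' h
    apply Fin.ext
    apply ar_inj hn (by have := j.is_lt; omega) (by have := j'.is_lt; omega)
    exact congrArg Subtype.val h
  · intro p
    obtain ⟨j, hj, hje⟩ := (prim_iff hn p.val).mp p.2
    exact ⟨⟨j, by omega⟩, Subtype.ext hje⟩

noncomputable def phiE (hn : 3 ≤ n) (hm : 2 * n = m + 2) :
    Fin (m + 2) ≃ MVert (cycleComplex n) :=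
  Equiv.ofBijective _ (fArr_bij hn hm)

lemma phiE_val (hn : 3 ≤ n) (hm : 2 * n = m + 2) (j : Fin (m + 2)) :
    (phiE hn hm j).val = ar n j.val := rfl

lemma W_eq (hn : 3 ≤ n) (hm : 2 * n = m + 2) (t : Finset (Fin (m + 2))) :
    {p | ∃ x ∈ t.image (phiE hn hm), (x : MVert (cycleComplex n)).val = p} = Wt n m t := by
  ext p
  simp only [Set.mem_setOf_eq, Finset.mem_image]
  constructor
  · rintro ⟨x, ⟨j, hj, rfl⟩, rfl⟩
    exact ⟨j, hj, rfl⟩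
  · rintro ⟨j, hj, rfl⟩
    exact ⟨phiE hn hm j, ⟨j, hj, rfl⟩, rfl⟩

lemma mem_morse (s : Finset (MVert (cycleComplex n))) :
    s ∈ (morse (cycleComplex n)).faces ↔ s.Nonempty ∧
      IsGVF (cycleComplex n) {p | ∃ x ∈ s, (x : MVert (cycleComplex n)).val = p} := Iff.rfl

lemma face_iff (hn : 3 ≤ n) (hm : 2 * n = m + 2) (t : Finset (Fin (m + 2))) :
    t.image (phiE hn hm) ∈ (morse (cycleComplex n)).faces ↔ Good m t := by
  rw [mem_morse, W_eq hn hm t]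
  constructor
  · rintro ⟨hne, hdvf, hnp⟩
    refine ⟨Finset.image_nonempty.mp hne, (dvf_iff hn hm t).mp hdvf, ?_, ?_⟩
    · rintro rfl
      exact hnp (closed_ev hn hm (subset_refl _))
    · rintro rfl
      exact hnp (closed_od hn hm (subset_refl _))
  · rintro ⟨hne, hind, hev, hod⟩
    refine ⟨hne.image _, (dvf_iff hn hm t).mpr hind, ?_⟩
    intro hp
    rcases path_to_orient hn hm ((dvf_iff hn hm t).mpr hind) hp with h | h
    exacts [hev h, hod h]

lemma sub_par (hm : 2 * n = m + 2) (a b : Fin (m + 2)) :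
    (a - b).val % 2 = (a.val + b.val) % 2 := by
  rw [Fin.sub_def]
  show ((m + 2 - b.val + a.val) % (m + 2)) % 2 = _
  rw [Nat.mod_mod_of_dvd _ ⟨n, by omega⟩]
  have := a.is_lt
  have := b.is_lt
  omega

lemma mem_image_perm (g : Equiv.Perm (Fin (m + 2))) (s : Finset (Fin (m + 2)))
    (j : Fin (m + 2)) : j ∈ s.image g ↔ g.symm j ∈ s := by
  rw [Finset.mem_image]
  constructor
  · rintro ⟨x, hx, rfl⟩
    simpa using hx
  · intro hj
    exact ⟨_, hj, g.apply_symm_apply j⟩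

lemma image_evod (hn : 3 ≤ n) (hm : 2 * n = m + 2) (g : Equiv.Perm (Fin (m + 2)))
    (hg : g ∈ autG (SimpleGraph.cycleGraph (m + 2))) :
    ((EvF m).image g = EvF m ∧ (OdF m).image g = OdF m) ∨
      ((EvF m).image g = OdF m ∧ (OdF m).image g = EvF m) := by
  have hpar : ∀ j : Fin (m + 2), (g.symm j).val % 2 = (j.val + (g 0).val) % 2 := by
    rcases CycAux.classify (by omega) g hg with h | h
    · intro j
      have hs : g.symm j = j - g 0 := by
        apply g.injective
        rw [g.apply_symm_apply, h]
        ring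
      rw [hs, sub_par hm]
    · intro j
      have hs : g.symm j = g 0 - j := by
        apply g.injective
        rw [g.apply_symm_apply, h]
        ring
      rw [hs, sub_par hm]
      omega
  rcases Nat.mod_two_eq_zero_or_one (g 0).val with hc | hc
  · left
    constructor <;>
      · apply Finset.ext
        intro j
        rw [mem_image_perm]
        simp only [EvF, OdF, mem_filter, mem_univ, true_and]
        rw [hpar j]
        omega
  · right
    constructor <;>
      · apply Finset.ext
        intro j
        rw [mem_image_perm]
        simp only [EvF, OdF, mem_filter, mem_univ, true_and]
        rw [hpar j]
        omega

lemma good_image (hn : 3 ≤ n) (hm : 2 * n = m + 2) (g : Equiv.Perm (Fin (m + 2)))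
    (hg : g ∈ autG (SimpleGraph.cycleGraph (m + 2))) (t : Finset (Fin (m + 2))) :
    Good m t ↔ Good m (t.image g) := by
  have himg := Finset.image_injective g.injective
  have hind : Indep m t ↔ Indep m (t.image g) := by
    constructor
    · rintro hI u hu v hv
      rw [mem_image_perm] at hu hv
      have := hI _ hu _ hv
      rwa [← g.apply_symm_apply u, ← g.apply_symm_apply v, hg] 
    · intro hI u hu v hv
      rw [← hg u v]
      exact hI _ (Finset.mem_image_of_mem g hu) _ (Finset.mem_image_of_mem g hv)
  have hne : t.Nonempty ↔ (t.image g).Nonempty := Finset.image_nonempty.symm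
  rcases image_evod hn hm g hg with ⟨h1, h2⟩ | ⟨h1, h2⟩
  · have e1 : t.image g = EvF m ↔ t = EvF m := by
      conv_lhs => rw [← h1]
      exact ⟨fun h => himg h, fun h => by rw [h]⟩
    have e2 : t.image g = OdF m ↔ t = OdF m := by
      conv_lhs => rw [← h2]
      exact ⟨fun h => himg h, fun h => by rw [h]⟩
    unfold Good
    simp only [ne_eq]
    rw [← hind, ← hne, e1, e2]
  · have e1 : t.image g = OdF m ↔ t = EvF m := by
      conv_lhs => rw [← h1]
      exact ⟨fun h => himg h, fun h => by rw [h]⟩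
    have e2 : t.image g = EvF m ↔ t = OdF m := by
      conv_lhs => rw [← h2]
      exact ⟨fun h => himg h, fun h => by rw [h]⟩
    unfold Good
    simp only [ne_eq]
    rw [← hind, ← hne, e1, e2]
    tauto

lemma three_pigeon {X : Type} {a b c u v : X} (hab : a ≠ b) (hac : a ≠ c) (hbc : b ≠ c)
    (h0 : a = u ∨ a = v) (h2 : b = u ∨ b = v) (h4 : c = u ∨ c = v) : False := by
  rcases h0 with rfl | rfl <;> rcases h2 with h2 | h2 <;> rcases h4 with h4 | h4 <;>
    first | tauto | exact hbc (h2.trans h4.symm)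

lemma good_pair (hn : 3 ≤ n) (hm : 2 * n = m + 2) {u v : Fin (m + 2)} (huv : u ≠ v)
    (hnadj : ¬ (SimpleGraph.cycleGraph (m + 2)).Adj u v) : Good m ({u, v} : Finset (Fin (m+2))) := by
  have hm4 : 4 ≤ m := by omega
  refine ⟨insert_nonempty _ _, ?_, ?_, ?_⟩
  · intro a ha b hb
    simp only [mem_insert, mem_singleton] at ha hb
    rcases ha with rfl | rfl <;> rcases hb with rfl | rfl
    · exact SimpleGraph.irrefl _
    · exact hnadj
    · exact fun h => hnadj h.symm
    · exact SimpleGraph.irrefl _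
  · intro h
    have h0 : (⟨0, by omega⟩ : Fin (m+2)) ∈ EvF m := by
      rw [EvF, mem_filter]; exact ⟨mem_univ _, by show 0 % 2 = 0; omega⟩
    have h2 : (⟨2, by omega⟩ : Fin (m+2)) ∈ EvF m := by
      rw [EvF, mem_filter]; exact ⟨mem_univ _, by show 2 % 2 = 0; omega⟩
    have h4 : (⟨4, by omega⟩ : Fin (m+2)) ∈ EvF m := by
      rw [EvF, mem_filter]; exact ⟨mem_univ _, by show 4 % 2 = 0; omega⟩
    rw [← h] at h0 h2 h4
    simp only [mem_insert, mem_singleton] at h0 h2 h4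
    exact three_pigeon (by simp [Fin.ext_iff]) (by simp [Fin.ext_iff])
      (by simp [Fin.ext_iff]) h0 h2 h4
  · intro h
    have h0 : (⟨1, by omega⟩ : Fin (m+2)) ∈ OdF m := by
      rw [OdF, mem_filter]; exact ⟨mem_univ _, by show 1 % 2 = 1; omega⟩
    have h2 : (⟨3, by omega⟩ : Fin (m+2)) ∈ OdF m := by
      rw [OdF, mem_filter]; exact ⟨mem_univ _, by show 3 % 2 = 1; omega⟩
    have h4 : (⟨5, by omega⟩ : Fin (m+2)) ∈ OdF m := by
      rw [OdF, mem_filter]; exact ⟨mem_univ _, by show 5 % 2 = 1; omega⟩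
    rw [← h] at h0 h2 h4
    simp only [mem_insert, mem_singleton] at h0 h2 h4
    exact three_pigeon (by simp [Fin.ext_iff]) (by simp [Fin.ext_iff])
      (by simp [Fin.ext_iff]) h0 h2 h4

lemma autG_of_good (hn : 3 ≤ n) (hm : 2 * n = m + 2) (g : Equiv.Perm (Fin (m + 2)))
    (hgood : ∀ t, Good m t ↔ Good m (t.image g)) :
    g ∈ autG (SimpleGraph.cycleGraph (m + 2)) := by
  have key1 : ∀ u v : Fin (m+2), u ≠ v → ¬ (SimpleGraph.cycleGraph (m+2)).Adj u v →
      ¬ (SimpleGraph.cycleGraph (m+2)).Adj (g u) (g v) := by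
    intro u v huv hno
    have h2 := (hgood _).mp (good_pair hn hm huv hno)
    rw [Finset.image_insert, Finset.image_singleton] at h2
    exact fun hadj => h2.2.1 _ (mem_insert_self _ _) _
      (mem_insert_of_mem (mem_singleton_self _)) hadj
  have key2 : ∀ u v : Fin (m+2), u ≠ v → ¬ (SimpleGraph.cycleGraph (m+2)).Adj (g u) (g v) →
      ¬ (SimpleGraph.cycleGraph (m+2)).Adj u v := by
    intro u v huv hno
    have h1 : Good m ({g u, g v} : Finset (Fin (m+2))) :=
      good_pair hn hm (fun h => huv (g.injective h)) hno
    have h2 : Good m ({u, v} : Finset (Fin (m+2))) := by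
      apply (hgood _).mpr
      rw [Finset.image_insert, Finset.image_singleton]
      exact h1
    exact fun hadj => h2.2.1 _ (mem_insert_self _ _) _
      (mem_insert_of_mem (mem_singleton_self _)) hadj
  intro u v
  by_cases huv : u = v
  · subst huv
    constructor
    · intro h
      exact absurd h (SimpleGraph.irrefl _)
    · intro h
      exact absurd h (SimpleGraph.irrefl _)
  · constructor
    · intro h
      by_contra hno
      exact key1 u v huv hno h
    · intro h
      by_contra hno
      exact key2 u v huv hno h

noncomputable def PhiM (hn : 3 ≤ n) (hm : 2 * n = m + 2) :
    Equiv.Perm (MVert (cycleComplex n)) ≃* Equiv.Perm (Fin (m + 2)) where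
  toEquiv := Equiv.permCongr (phiE hn hm).symm
  map_mul' := by
    intro p q
    ext x
    simp [Equiv.permCongr_apply, Equiv.Perm.mul_apply]

lemma PhiM_apply (hn : 3 ≤ n) (hm : 2 * n = m + 2) (e : Equiv.Perm (MVert (cycleComplex n)))
    (x : Fin (m + 2)) : PhiM hn hm e x = (phiE hn hm).symm (e (phiE hn hm x)) := by
  simp [PhiM, Equiv.permCongr_apply]

lemma image_rel (hn : 3 ≤ n) (hm : 2 * n = m + 2) (e : Equiv.Perm (MVert (cycleComplex n)))
    (t : Finset (Fin (m + 2))) :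
    (t.image (phiE hn hm)).image e = (t.image (PhiM hn hm e)).image (phiE hn hm) := by
  rw [Finset.image_image, Finset.image_image]
  apply Finset.image_congr
  intro j _
  simp [Function.comp, PhiM_apply, Equiv.apply_symm_apply]

lemma key_mem (hn : 3 ≤ n) (hm : 2 * n = m + 2) (e : Equiv.Perm (MVert (cycleComplex n))) :
    e ∈ autK (morse (cycleComplex n)) ↔
      PhiM hn hm e ∈ autG (SimpleGraph.cycleGraph (m + 2)) := by
  constructor
  · intro he
    apply autG_of_good hn hm
    intro t
    rw [← face_iff hn hm, ← face_iff hn hm, ← image_rel hn hm e t]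
    exact he (t.image (phiE hn hm))
  · intro hg s
    have hs : (s.image (phiE hn hm).symm).image (phiE hn hm) = s := by
      rw [Finset.image_image]
      have : (phiE hn hm) ∘ (phiE hn hm).symm = id := by
        ext x
        simp
      rw [this, Finset.image_id]
    rw [← hs, image_rel hn hm e, face_iff hn hm, face_iff hn hm]
    exact good_image hn hm _ hg _

lemma map_autK (hn : 3 ≤ n) (hm : 2 * n = m + 2) :
    (autK (morse (cycleComplex n))).map
        ((PhiM hn hm : Equiv.Perm (MVert (cycleComplex n)) →* Equiv.Perm (Fin (m + 2)))) =
      autG (SimpleGraph.cycleGraph (m + 2)) := by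
  ext g
  rw [Subgroup.mem_map]
  constructor
  · rintro ⟨e, he, rfl⟩
    exact (key_mem hn hm e).mp he
  · intro hg
    refine ⟨(PhiM hn hm).symm g, (key_mem hn hm _).mpr ?_, ?_⟩
    · rwa [MulEquiv.apply_symm_apply]
    · exact MulEquiv.apply_symm_apply _ g

noncomputable def partA (hn : 3 ≤ n) (hm : 2 * n = m + 2) :
    autK (morse (cycleComplex n)) ≃* autG (SimpleGraph.cycleGraph (m + 2)) :=
  ((PhiM hn hm).subgroupMap (autK (morse (cycleComplex n)))).trans
    (MulEquiv.subgroupCongr (map_autK hn hm))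

end MorAux

/-- for `n ≥ 3`, `Aut(M(C_n)) ≅ Aut(C_{2n})`, the latter being the
dihedral group of order `4n`. -/
theorem autMorse_cycle (n : ℕ) (hn : 3 ≤ n) :
    Nonempty (autK (morse (cycleComplex n)) ≃* autG (SimpleGraph.cycleGraph (2 * n))) ∧
    Nonempty (autG (SimpleGraph.cycleGraph (2 * n)) ≃* DihedralGroup (2 * n)) := by
  obtain ⟨m, hm⟩ : ∃ m, 2 * n = m + 2 := ⟨2 * n - 2, by omega⟩
  rw [hm]
  exact ⟨⟨MorAux.partA hn hm⟩, ⟨(CycAux.partB (by omega)).symm⟩⟩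
end

section
/- Let n ≥ 2 and let f be a graph automorphism of the Hasse diagram of ∂Δⁿ. Then for every 0 ≤ i ≤ n−1, f maps the set H_i of i-dimensional simplices either onto H_i or onto H_{n−i−1}; moreover, which of the two cases occurs for every i is determined by whether f(H_0) = H_0 or f(H_0) = H_{n−1}. -/
/-!
Dimension grades the Hasse diagram of any simplicial complex: adjacent simplices differ in
dimension by one, and every simplex of positive dimension has a facet. So an automorphism that
maps the vertices onto the vertices preserves every dimension, by induction: the image of a
simplex cannot drop two dimensions, because the inverse already preserves the lower ones.

In `∂Δⁿ` the vertices and the `(n-1)`-simplices are exactly the simplices of degree `n`. Two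
distinct vertices have exactly one common neighbour, while a vertex and an `(n-1)`-simplex never
do, so an automorphism sends all of `H_0` to `H_0` or all of it to `H_{n-1}`. In the second case
composing with complementation, an automorphism exchanging `H_i` and `H_{n-i-1}`, brings us back
to the first.
-/

open Finset

variable {V : Type} [DecidableEq V]

/-- The boundary of the `n`-simplex: all nonempty proper subsets of the
`(n+1)`-element vertex set. -/
def bdSimplex (n : ℕ) : SComplex (Fin (n + 1)) where
  faces := {s | s.Nonempty ∧ s ≠ Finset.univ}
  nonempty_of_mem := fun h => h.1
  down_closed := by
    rintro s t ⟨-, hs⟩ hts htne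
    refine ⟨htne, fun h => hs ?_⟩
    subst h
    exact Finset.univ_subset_iff.mp hts

instance (n : ℕ) : DecidablePred (· ∈ (bdSimplex n).faces) :=
  fun s => inferInstanceAs (Decidable (s.Nonempty ∧ s ≠ Finset.univ))

/-- The vertices of the Hasse diagram of `∂Δⁿ`: the simplices of `∂Δⁿ`. -/
abbrev BdVert (n : ℕ) : Type := {s : Finset (Fin (n + 1)) // s ∈ (bdSimplex n).faces}

instance (n : ℕ) : Fintype (BdVert n) := Subtype.fintype _

instance instHasseAdjDecidable (K : SComplex V) : DecidableRel (hasse K).Adj :=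
  fun a b => inferInstanceAs
    (Decidable ((a.1 ⊆ b.1 ∧ b.1.card = a.1.card + 1) ∨ (b.1 ⊆ a.1 ∧ a.1.card = b.1.card + 1)))

/-- The `i`-th layer of the Hasse diagram of `∂Δⁿ`: the simplices of
dimension `i` (cardinality `i + 1`). -/
def Hset (n i : ℕ) : Set (BdVert n) := {v | v.val.card = i + 1}

namespace SimpleGraph

variable {α : Type*} {G : SimpleGraph α}

structure IsGrading (G : SimpleGraph α) (r : α → ℕ) : Prop where
  adj : ∀ ⦃u v⦄, G.Adj u v → r u = r v + 1 ∨ r v = r u + 1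
  exists_adj_pred : ∀ v, 0 < r v → ∃ u, G.Adj u v ∧ r u + 1 = r v

namespace IsGrading

variable {r : α → ℕ}

lemma apply_eq_of_forall_lt (hr : G.IsGrading r) (φ : G ≃g G) {m : ℕ}
    (hφ : ∀ w, r w < m → r (φ w) = r w) (hφ' : ∀ w, r w < m → r (φ.symm w) = r w)
    {v : α} (hv : r v = m) (hm : 0 < m) : r (φ v) = m := by
  obtain ⟨u, huv, hu⟩ := hr.exists_adj_pred v (hv ▸ hm)
  have hφu : r (φ u) = r u := hφ u (by omega)
  rcases hr.adj (φ.map_adj_iff.2 huv) with h | h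
  · have := hφ' (φ v) (by omega)
    rw [φ.symm_apply_apply] at this
    omega
  · omega

theorem apply_eq (hr : G.IsGrading r) (φ : G ≃g G)
    (h0 : φ '' {v | r v = 0} = {v | r v = 0}) (v : α) : r (φ v) = r v := by
  have base : ∀ w, r w = 0 → r (φ w) = 0 ∧ r (φ.symm w) = 0 := by
    intro w hw
    refine ⟨h0.subset ⟨w, hw, rfl⟩, ?_⟩
    obtain ⟨x, hx, rfl⟩ := h0.symm.subset (show w ∈ {v | r v = 0} from hw)
    simpa using hx
  suffices ∀ m w, r w < m → r (φ w) = r w ∧ r (φ.symm w) = r w from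
    (this (r v + 1) v (Nat.lt_succ_self _)).1
  intro m
  induction m with
  | zero => simp
  | succ m ih =>
    intro w hw
    rcases (Nat.lt_succ_iff.1 hw).lt_or_eq with hlt | rfl
    · exact ih w hlt
    rcases Nat.eq_zero_or_pos (r w) with h | h
    · simpa [h] using base w h
    · have hφ := fun x hx => (ih x hx).1
      have hφ' := fun x hx => (ih x hx).2
      exact ⟨hr.apply_eq_of_forall_lt φ hφ hφ' rfl h,
        hr.apply_eq_of_forall_lt φ.symm hφ' hφ rfl h⟩

end IsGrading

theorem Iso.ncard_commonNeighbors {β : Type*} {G' : SimpleGraph β} (φ : G ≃g G') (u v : α) :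
    (G'.commonNeighbors (φ u) (φ v)).ncard = (G.commonNeighbors u v).ncard := by
  have : G'.commonNeighbors (φ u) (φ v) = φ '' G.commonNeighbors u v := by
    ext w
    obtain ⟨w, rfl⟩ := φ.surjective w
    simp [mem_commonNeighbors, φ.injective.mem_set_image, φ.map_adj_iff]
  rw [this, Set.ncard_image_of_injective _ φ.injective]

end SimpleGraph

lemma hasse_adj {K : SComplex V} {σ τ : {s // s ∈ K.faces}} :
    (hasse K).Adj σ τ ↔
      (σ.1 ⊆ τ.1 ∧ τ.1.card = σ.1.card + 1) ∨ (τ.1 ⊆ σ.1 ∧ σ.1.card = τ.1.card + 1) :=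
  Iff.rfl

theorem hasse_isGrading (K : SComplex V) : (hasse K).IsGrading fun σ => σ.1.card - 1 where
  adj u v h := by
    have := (K.nonempty_of_mem u.2).card_pos
    have := (K.nonempty_of_mem v.2).card_pos
    rcases h with ⟨-, h⟩ | ⟨-, h⟩ <;> omega
  exists_adj_pred σ hσ := by
    obtain ⟨x, hx⟩ := K.nonempty_of_mem σ.2
    have hcard := card_erase_of_mem hx
    have hne : (σ.1.erase x).Nonempty := card_pos.1 (by omega)
    refine ⟨⟨σ.1.erase x, K.down_closed σ.2 (erase_subset x σ.1) hne⟩, ?_, ?_⟩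
    · exact Or.inl ⟨erase_subset x σ.1, show σ.1.card = (σ.1.erase x).card + 1 by omega⟩
    · show (σ.1.erase x).card - 1 + 1 = σ.1.card - 1
      omega

theorem hasse_card_apply_eq {K : SComplex V} (φ : hasse K ≃g hasse K)
    (h0 : φ '' {σ | σ.1.card = 1} = {σ | σ.1.card = 1}) (σ : {s // s ∈ K.faces}) :
    (φ σ).1.card = σ.1.card := by
  have hpos (τ : {s // s ∈ K.faces}) : 0 < τ.1.card := (K.nonempty_of_mem τ.2).card_pos
  have hbottom : {τ : {s // s ∈ K.faces} | τ.1.card - 1 = 0} = {τ | τ.1.card = 1} := by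
    ext τ
    have := hpos τ
    simp only [Set.mem_ofPred_eq]
    omega
  have := (hasse_isGrading K).apply_eq φ (by rw [hbottom, h0]) σ
  have := hpos σ
  have := hpos (φ σ)
  omega

namespace bdSimplex

variable {n : ℕ}

lemma mem_faces_iff {s : Finset (Fin (n + 1))} :
    s ∈ (bdSimplex n).faces ↔ 1 ≤ s.card ∧ s.card ≤ n := by
  have := card_lt_iff_ne_univ s
  rw [Fintype.card_fin] at this
  change s.Nonempty ∧ s ≠ univ ↔ _
  rw [← card_pos, ← this]
  omega

lemma one_le_card (v : BdVert n) : 1 ≤ v.1.card := (mem_faces_iff.1 v.2).1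

lemma card_le (v : BdVert n) : v.1.card ≤ n := (mem_faces_iff.1 v.2).2

lemma compl_mem_faces (v : BdVert n) : v.1ᶜ ∈ (bdSimplex n).faces := by
  have := one_le_card v
  have := card_le v
  rw [mem_faces_iff, card_compl, Fintype.card_fin]
  omega

def complIso (n : ℕ) : hasse (bdSimplex n) ≃g hasse (bdSimplex n) where
  toFun v := ⟨v.1ᶜ, compl_mem_faces v⟩
  invFun v := ⟨v.1ᶜ, compl_mem_faces v⟩
  left_inv v := Subtype.ext (compl_compl v.1)
  right_inv v := Subtype.ext (compl_compl v.1)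
  map_rel_iff' {u v} := by
    have := card_le u
    have := card_le v
    have e1 : n + 1 - v.1.card = n + 1 - u.1.card + 1 ↔ u.1.card = v.1.card + 1 := by omega
    have e2 : n + 1 - u.1.card = n + 1 - v.1.card + 1 ↔ v.1.card = u.1.card + 1 := by omega
    simp only [Equiv.coe_fn_mk, hasse_adj, compl_subset_compl, card_compl, Fintype.card_fin,
      e1, e2]
    exact or_comm

@[simp] lemma complIso_apply_val (v : BdVert n) : (complIso n v).1 = v.1ᶜ := rfl

lemma card_complIso (v : BdVert n) : (complIso n v).1.card = n + 1 - v.1.card := by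
  rw [complIso_apply_val, card_compl, Fintype.card_fin]

lemma complIso_complIso (v : BdVert n) : complIso n (complIso n v) = v :=
  Subtype.ext (compl_compl v.1)

lemma image_complIso_image (s : Set (BdVert n)) : complIso n '' (complIso n '' s) = s := by
  simp [Set.image_image, complIso_complIso]

lemma image_complIso_Hset {i : ℕ} (hi : i ≤ n - 1) :
    complIso n '' Hset n i = Hset n (n - i - 1) := by
  ext w
  have := one_le_card w
  have := card_le w
  constructor
  · rintro ⟨v, hv, rfl⟩
    show (complIso n v).1.card = _
    rw [card_complIso, show v.1.card = i + 1 from hv]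
    omega
  · intro hw
    refine ⟨complIso n w, ?_, complIso_complIso w⟩
    show (complIso n w).1.card = _
    rw [card_complIso, show w.1.card = n - i - 1 + 1 from hw]
    omega

def downNbrs (v : BdVert n) : Finset (BdVert n) :=
  {w | w.1 ⊆ v.1 ∧ v.1.card = w.1.card + 1}

lemma card_downNbrs (v : BdVert n) :
    #(downNbrs v) = if v.1.card = 1 then 0 else v.1.card := by
  split_ifs with hv
  · refine card_eq_zero.2 (filter_eq_empty_iff.2 fun w _ ⟨_, hw⟩ => ?_)
    have := one_le_card w
    omega
  · have hv2 : 2 ≤ v.1.card := by have := one_le_card v; omega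
    have hmap : (downNbrs v).map (Function.Embedding.subtype _) =
        v.1.powersetCard (v.1.card - 1) := by
      ext t
      simp only [downNbrs, mem_map, mem_filter, mem_univ, true_and, mem_powersetCard,
        Function.Embedding.coe_subtype]
      constructor
      · rintro ⟨w, ⟨hwv, hcard⟩, rfl⟩
        exact ⟨hwv, by omega⟩
      · rintro ⟨htv, hcard⟩
        have hface : t ∈ (bdSimplex n).faces :=
          mem_faces_iff.2 ⟨by omega, (card_le_card htv).trans (card_le v)⟩
        exact ⟨⟨t, hface⟩, ⟨htv, show v.1.card = t.card + 1 by omega⟩, rfl⟩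
    rw [← card_map, hmap, card_powersetCard, Nat.choose_symm (by omega), Nat.choose_one_right]

lemma degree_eq_card_downNbrs_add (v : BdVert n) :
    (hasse (bdSimplex n)).degree v = #(downNbrs v) + #(downNbrs (complIso n v)) := by
  rw [← SimpleGraph.card_neighborFinset_eq_degree, SimpleGraph.neighborFinset_eq_filter]
  simp only [hasse_adj, filter_or]
  rw [card_union_of_disjoint (disjoint_filter.2 fun w _ h1 h2 => by omega), add_comm]
  congr 1
  have := card_le v
  refine card_nbij' (complIso n) (complIso n) (fun w hw => ?_) (fun w hw => ?_)
    (fun w _ => complIso_complIso w) (fun w _ => complIso_complIso w)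
  all_goals
    simp only [downNbrs, mem_coe, mem_filter, mem_univ, true_and, card_complIso] at hw ⊢
    have := card_le w
  · exact ⟨compl_subset_compl.2 hw.1, by omega⟩
  · exact ⟨subset_compl_comm.1 hw.1, by omega⟩

lemma degree_eq_iff (hn : 2 ≤ n) (v : BdVert n) :
    (hasse (bdSimplex n)).degree v = n ↔ v.1.card = 1 ∨ v.1.card = n := by
  have := one_le_card v
  have := card_le v
  rw [degree_eq_card_downNbrs_add, card_downNbrs, card_downNbrs, card_complIso]
  split_ifs <;> omega

lemma ncard_commonNeighbors_of_card_eq_one (hn : 2 ≤ n) {u v : BdVert n}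
    (hu : u.1.card = 1) (hv : v.1.card = 1) (huv : u ≠ v) :
    ((hasse (bdSimplex n)).commonNeighbors u v).ncard = 1 := by
  obtain ⟨a, ha⟩ := card_eq_one.1 hu
  obtain ⟨b, hb⟩ := card_eq_one.1 hv
  have hab : a ≠ b := by
    rintro rfl
    exact huv (Subtype.ext (ha.trans hb.symm))
  have hface : ({a, b} : Finset (Fin (n + 1))) ∈ (bdSimplex n).faces :=
    mem_faces_iff.2 (by rw [card_pair hab]; omega)
  refine Set.ncard_eq_one.2 ⟨⟨{a, b}, hface⟩, Set.ext fun w => ?_⟩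
  have := one_le_card w
  simp only [SimpleGraph.mem_commonNeighbors, hasse_adj, Set.mem_singleton_iff, ha, hb,
    card_singleton, singleton_subset_iff, Subtype.ext_iff]
  constructor
  · rintro ⟨⟨haw, hw⟩ | ⟨-, hw⟩, ⟨hbw, -⟩ | ⟨-, hw'⟩⟩
    · exact (eq_of_subset_of_card_le (insert_subset haw (singleton_subset_iff.2 hbw))
        (by rw [card_pair hab, hw])).symm
    all_goals omega
  · rintro hw
    rw [hw, card_pair hab]
    simp

lemma ncard_commonNeighbors_ne_one {u v : BdVert n} (hu : u.1.card = 1) (hv : v.1.card = n) :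
    ((hasse (bdSimplex n)).commonNeighbors u v).ncard ≠ 1 := by
  intro h
  obtain ⟨w, hw⟩ := Set.ncard_eq_one.1 h
  have hwuv : w ∈ (hasse (bdSimplex n)).commonNeighbors u v := hw ▸ rfl
  rw [SimpleGraph.mem_commonNeighbors, hasse_adj, hasse_adj] at hwuv
  -- The common neighbour `w` forces `n = 3` and `u ⊂ w ⊂ v`; trading the point of `w \ u`
  -- for that of `v \ w` gives a second one.
  have := one_le_card w
  have := card_le w
  obtain ⟨huw, hwc⟩ := hwuv.1.resolve_right fun ⟨_, h⟩ => by omega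
  obtain ⟨hwv, hvc⟩ := hwuv.2.resolve_left fun ⟨_, h⟩ => by omega
  obtain ⟨y, hy⟩ : (v.1 \ w.1).Nonempty := by
    rw [← card_pos, card_sdiff_of_subset hwv]
    omega
  rw [mem_sdiff] at hy
  have hyu : y ∉ u.1 := fun h => hy.2 (huw h)
  have hcard := card_insert_of_notMem hyu
  let w' : BdVert n := ⟨insert y u.1, mem_faces_iff.2 (by omega)⟩
  have hw' : w' ∈ (hasse (bdSimplex n)).commonNeighbors u v := by
    rw [SimpleGraph.mem_commonNeighbors, hasse_adj, hasse_adj]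
    exact ⟨Or.inl ⟨subset_insert _ _, hcard⟩,
      Or.inr ⟨insert_subset hy.1 (huw.trans hwv),
        show v.1.card = (insert y u.1).card + 1 by omega⟩⟩
  rw [hw, Set.mem_singleton_iff] at hw'
  exact hy.2 (congrArg Subtype.val hw' ▸ mem_insert_self y u.1)

theorem mapsTo_Hset_zero (hn : 2 ≤ n) (φ : hasse (bdSimplex n) ≃g hasse (bdSimplex n)) :
    Set.MapsTo φ (Hset n 0) (Hset n 0) ∨ Set.MapsTo φ (Hset n 0) (Hset n (n - 1)) := by
  have hdeg : ∀ v ∈ Hset n 0, φ v ∈ Hset n 0 ∨ φ v ∈ Hset n (n - 1) := by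
    intro v hv
    have hφv := (degree_eq_iff hn v).2 (Or.inl hv)
    rw [← φ.degree_eq, degree_eq_iff hn] at hφv
    simp only [Hset, Set.mem_ofPred_eq]
    omega
  by_contra! h
  simp only [Set.MapsTo, not_forall] at h
  obtain ⟨⟨u, hu, hφu⟩, ⟨v, hv, hφv⟩⟩ := h
  have hφu' := (hdeg u hu).resolve_left hφu
  have hφv' := (hdeg v hv).resolve_right hφv
  have huv : v ≠ u := by
    rintro rfl
    exact hφu hφv'
  have hφu_card : (φ u).1.card = n := by
    have : (φ u).1.card = n - 1 + 1 := hφu'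
    omega
  apply ncard_commonNeighbors_ne_one hφv' hφu_card
  rw [φ.ncard_commonNeighbors]
  exact ncard_commonNeighbors_of_card_eq_one hn hv hu huv

theorem image_Hset_zero (hn : 2 ≤ n) (φ : hasse (bdSimplex n) ≃g hasse (bdSimplex n)) :
    φ '' Hset n 0 = Hset n 0 ∨ φ '' Hset n 0 = Hset n (n - 1) := by
  have hcard : (Hset n (n - 1)).ncard = (Hset n 0).ncard := by
    have := image_complIso_Hset (n := n) (Nat.zero_le _)
    rw [Nat.sub_zero] at this
    rw [← this, Set.ncard_image_of_injective _ (complIso n).injective]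
  have himage {s t : Set (BdVert n)} (h : Set.MapsTo φ s t) (hst : t.ncard ≤ s.ncard) :
      φ '' s = t :=
    Set.eq_of_subset_of_ncard_le h.image_subset
      (by rwa [Set.ncard_image_of_injective _ φ.injective]) (Set.toFinite t)
  exact (mapsTo_Hset_zero hn φ).imp (himage · le_rfl) (himage · hcard.le)

theorem image_Hset_eq_of_image_Hset_zero_eq (φ : hasse (bdSimplex n) ≃g hasse (bdSimplex n))
    (h0 : φ '' Hset n 0 = Hset n 0) (i : ℕ) : φ '' Hset n i = Hset n i := by
  have hcard := hasse_card_apply_eq φ h0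
  ext w
  constructor
  · rintro ⟨v, hv, rfl⟩
    exact (hcard v).trans hv
  · intro hw
    refine ⟨φ.symm w, ?_, φ.apply_symm_apply w⟩
    show (φ.symm w).1.card = i + 1
    rw [← hcard, φ.apply_symm_apply]
    exact hw

theorem image_Hset_eq_of_image_Hset_zero_eq_facets
    (φ : hasse (bdSimplex n) ≃g hasse (bdSimplex n)) (h0 : φ '' Hset n 0 = Hset n (n - 1))
    {i : ℕ} (hi : i ≤ n - 1) : φ '' Hset n i = Hset n (n - i - 1) := by
  let ψ := φ.trans (complIso n)
  have hψ_image (s : Set (BdVert n)) : ψ '' s = complIso n '' (φ '' s) :=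
    (Set.image_image (complIso n) φ s).symm
  have hψ : ψ '' Hset n 0 = Hset n 0 := by
    have hc := image_complIso_Hset (n := n) (i := n - 1) le_rfl
    rwa [show n - (n - 1) - 1 = 0 by omega, ← h0, ← hψ_image] at hc
  rw [← image_complIso_image (φ '' Hset n i), ← hψ_image,
    image_Hset_eq_of_image_Hset_zero_eq ψ hψ, image_complIso_Hset hi]

end bdSimplex

/-- a graph automorphism `f` of the Hasse diagram of `∂Δⁿ`
(`n ≥ 2`) maps each layer `H_i` onto `H_i` or onto `H_{n-i-1}`, and which case
occurs for every `i` is determined by the image of `H_0`. -/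
theorem hasse_aut_layers (n : ℕ) (hn : 2 ≤ n) (f : Equiv.Perm (BdVert n))
    (hf : f ∈ autG (hasse (bdSimplex n))) :
    (⇑f '' Hset n 0 = Hset n 0 ∨ ⇑f '' Hset n 0 = Hset n (n - 1)) ∧
    (⇑f '' Hset n 0 = Hset n 0 → ∀ i ≤ n - 1, ⇑f '' Hset n i = Hset n i) ∧
    (⇑f '' Hset n 0 = Hset n (n - 1) → ∀ i ≤ n - 1, ⇑f '' Hset n i = Hset n (n - i - 1)) := by
  let φ : hasse (bdSimplex n) ≃g hasse (bdSimplex n) := ⟨f, hf _ _⟩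
  exact ⟨bdSimplex.image_Hset_zero hn φ,
    fun h0 i _ => bdSimplex.image_Hset_eq_of_image_Hset_zero_eq φ h0 i,
    fun h0 _ hi => bdSimplex.image_Hset_eq_of_image_Hset_zero_eq_facets φ h0 hi⟩
end

section
/- For n ≥ 2, the stabilizer of the layer H_0 (the set of 0-simplices) under the action of Aut(H(∂Δⁿ)) on the set of layers is isomorphic to Aut(∂Δⁿ), i.e., every automorphism of the Hasse diagram of ∂Δⁿ fixing H_0 setwise is induced by a unique simplicial automorphism of ∂Δⁿ. -/
open Finset

variable {V : Type} [DecidableEq V]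

/-- The subgroup of automorphisms of the Hasse diagram of `∂Δⁿ` fixing the
layer `H_0` setwise. -/
def stabH0 (n : ℕ) : Subgroup (Equiv.Perm (BdVert n)) where
  carrier := {e | e ∈ autG (hasse (bdSimplex n)) ∧ ⇑e '' Hset n 0 = Hset n 0}
  one_mem' := ⟨(autG (hasse (bdSimplex n))).one_mem, by simp⟩
  mul_mem' := by
    rintro a b ⟨ha1, ha2⟩ ⟨hb1, hb2⟩
    refine ⟨(autG (hasse (bdSimplex n))).mul_mem ha1 hb1, ?_⟩
    rw [Equiv.Perm.coe_mul, Set.image_comp, hb2, ha2]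
  inv_mem' := by
    rintro a ⟨ha1, ha2⟩
    refine ⟨(autG (hasse (bdSimplex n))).inv_mem ha1, ?_⟩
    conv_lhs => rw [← ha2]
    rw [← Set.image_comp]
    simp [Equiv.Perm.inv_def]


/-! An automorphism of the Hasse diagram fixing the layer of vertices preserves dimension: a
simplex of dimension `k + 1` is adjacent to a facet of dimension `k`, so by induction its image has
dimension at most `k + 1`, and applying this to the inverse gives equality. An adjacency between
simplices of consecutive dimensions is an inclusion, so the automorphism preserves inclusion of
faces. Hence it sends every simplex `s` to the image of `s` under the permutation it induces on
the vertices, and that permutation is a simplicial automorphism. -/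

section LayerStabilizer

open scoped Pointwise

abbrev Face (K : SComplex V) : Type := {s : Finset V // s ∈ K.faces}

variable {K : SComplex V}

lemma hasse_adj_erase {s : Finset V} (hs : s ∈ K.faces) {x : V} (hx : x ∈ s)
    (hne : (s.erase x).Nonempty) :
    (hasse K).Adj ⟨s.erase x, K.down_closed hs (erase_subset x s) hne⟩ ⟨s, hs⟩ :=
  Or.inl ⟨erase_subset x s, (card_erase_add_one hx).symm⟩

lemma card_le_succ_of_hasse_adj {u v : Face K} (h : (hasse K).Adj u v) :
    v.1.card ≤ u.1.card + 1 := by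
  rcases h with ⟨-, h⟩ | ⟨-, h⟩ <;> omega

lemma subset_of_hasse_adj {u v : Face K} (h : (hasse K).Adj u v)
    (hc : u.1.card < v.1.card) : u.1 ⊆ v.1 := by
  rcases h with ⟨h, -⟩ | ⟨-, h⟩
  · exact h
  · omega

def vertexLayer (K : SComplex V) : Set (Face K) := {v | v.1.card = 1}

lemma mem_vertexLayer {v : Face K} : v ∈ vertexLayer K ↔ v.1.card = 1 :=
  Iff.rfl

def layerStab (K : SComplex V) : Subgroup (Equiv.Perm (Face K)) :=
  autG (hasse K) ⊓ MulAction.stabilizer _ (vertexLayer K)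

variable {e : Equiv.Perm (Face K)}

lemma apply_mem_vertexLayer (he : e ∈ layerStab K) {v : Face K}
    (hv : v ∈ vertexLayer K) : e v ∈ vertexLayer K := by
  rw [← MulAction.mem_stabilizer_iff.mp he.2]
  exact Set.smul_mem_smul_set hv

lemma card_apply_le (he : e ∈ layerStab K) (v : Face K) :
    (e v).1.card ≤ v.1.card := by
  obtain ⟨s, hs⟩ := v
  induction s using Finset.strongInduction with
  | H s ih =>
  obtain ⟨x, hx⟩ := K.nonempty_of_mem hs
  by_cases hne : (s.erase x).Nonempty
  · have hadj := (he.1 _ _).2 (hasse_adj_erase hs hx hne)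
    calc (e ⟨s, hs⟩).1.card ≤ (e ⟨s.erase x, _⟩).1.card + 1 := card_le_succ_of_hasse_adj hadj
      _ ≤ (s.erase x).card + 1 := Nat.add_le_add_right (ih _ (erase_ssubset hx) _) 1
      _ = s.card := card_erase_add_one hx
  · have hs1 : s.card = 1 := by
      rw [← card_erase_add_one hx, not_nonempty_iff_eq_empty.mp hne, card_empty]
    exact (apply_mem_vertexLayer he (v := ⟨s, hs⟩) hs1).le.trans hs1.ge

lemma card_apply (he : e ∈ layerStab K) (v : Face K) :
    (e v).1.card = v.1.card := by
  refine (card_apply_le he v).antisymm ?_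
  simpa using card_apply_le ((layerStab K).inv_mem he) (e v)

lemma apply_subset_apply (he : e ∈ layerStab K) {u v : Face K}
    (huv : u.1 ⊆ v.1) : (e u).1 ⊆ (e v).1 := by
  obtain ⟨s, hs⟩ := v
  induction s using Finset.strongInduction with
  | H s ih =>
  by_cases heq : u.1 = s
  · obtain ⟨u, hu⟩ := u
    subst heq
    rfl
  obtain ⟨x, hxs, hxu⟩ := not_subset.mp fun h => heq (huv.antisymm h)
  have hsub : u.1 ⊆ s.erase x := fun y hy => mem_erase.mpr ⟨fun h => hxu (h ▸ hy), huv hy⟩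
  have hne : (s.erase x).Nonempty := (K.nonempty_of_mem u.2).mono hsub
  refine (ih _ (erase_ssubset hxs) _ hsub).trans (subset_of_hasse_adj ((he.1 _ _).2
    (hasse_adj_erase hs hxs hne)) ?_)
  rw [card_apply he, card_apply he, ← card_erase_add_one hxs]
  exact Nat.lt_succ_self _

lemma mem_layerStab_of_card_apply (hadj : e ∈ autG (hasse K))
    (hcard : ∀ v, (e v).1.card = v.1.card) : e ∈ layerStab K := by
  refine ⟨hadj, MulAction.mem_stabilizer_iff.mpr (Set.ext fun v => ?_)⟩
  rw [Set.mem_smul_set_iff_inv_smul_mem]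
  simp only [mem_vertexLayer, Equiv.Perm.smul_def]
  conv_rhs => rw [← e.apply_symm_apply v, hcard]
  rfl

def facePerm (σ : autK K) : Equiv.Perm (Face K) :=
  Equiv.Perm.subtypePerm σ.1.finsetCongr fun s => by
    rw [Equiv.finsetCongr_apply, map_eq_image]
    exact (σ.2 s).symm

@[simp]
lemma facePerm_apply (σ : autK K) (v : Face K) :
    (facePerm σ v).1 = v.1.image σ.1 := by
  simp [facePerm, map_eq_image]

lemma facePerm_mem_layerStab (σ : autK K) : facePerm σ ∈ layerStab K := by
  have hcard (v : Face K) : (facePerm σ v).1.card = v.1.card := by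
    rw [facePerm_apply, card_image_of_injective _ σ.1.injective]
  refine mem_layerStab_of_card_apply (fun u v => ?_) hcard
  simp only [hasse, facePerm_apply, card_image_of_injective _ σ.1.injective,
    image_subset_image_iff σ.1.injective]

def vertexLayerPerm (he : e ∈ layerStab K) : Equiv.Perm (vertexLayer K) :=
  e.subtypePerm fun v => by simp only [mem_vertexLayer, card_apply he]

variable (hK : ∀ x : V, {x} ∈ K.faces)

noncomputable def singletonEquiv : V ≃ vertexLayer K :=
  Equiv.ofBijective (fun x => ⟨⟨{x}, hK x⟩, card_singleton x⟩)
    ⟨fun _ _ h => singleton_injective (congrArg (fun v => v.1.1) h),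
      fun ⟨⟨s, _⟩, hs⟩ => by
        obtain ⟨x, rfl⟩ := card_eq_one.mp hs
        exact ⟨x, rfl⟩⟩

noncomputable def vertexPerm (he : e ∈ layerStab K) : Equiv.Perm V :=
  (singletonEquiv hK).trans <| (vertexLayerPerm he).trans (singletonEquiv hK).symm

lemma apply_singleton (he : e ∈ layerStab K) (x : V) :
    (e ⟨{x}, hK x⟩).1 = {vertexPerm hK he x} := by
  have h := (singletonEquiv hK).apply_symm_apply (vertexLayerPerm he (singletonEquiv hK x))
  exact (congrArg (fun v => v.1.1) h).symm

lemma apply_eq_image (he : e ∈ layerStab K) (v : Face K) :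
    (e v).1 = v.1.image (vertexPerm hK he) := by
  have hsub : v.1.image (vertexPerm hK he) ⊆ (e v).1 := by
    intro y hy
    obtain ⟨x, hx, rfl⟩ := mem_image.mp hy
    have := apply_subset_apply he (u := ⟨{x}, hK x⟩) (v := v) (singleton_subset_iff.mpr hx)
    rw [apply_singleton hK he] at this
    exact singleton_subset_iff.mp this
  refine (eq_of_subset_of_card_le hsub ?_).symm
  rw [card_apply he, card_image_of_injective _ (vertexPerm hK he).injective]

lemma vertexPerm_mem_autK (he : e ∈ layerStab K) : vertexPerm hK he ∈ autK K := by
  intro s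
  refine ⟨fun hs => apply_eq_image hK he ⟨s, hs⟩ ▸ (e ⟨s, hs⟩).2, fun hs => ?_⟩
  set w := e.symm ⟨_, hs⟩
  have hw : w.1.image (vertexPerm hK he) = s.image (vertexPerm hK he) := by
    rw [← apply_eq_image hK he, Equiv.apply_symm_apply]
  exact (image_injective (vertexPerm hK he).injective hw : w.1 = s) ▸ w.2

noncomputable def autKEquivLayerStab : autK K ≃* layerStab K where
  toFun σ := ⟨facePerm σ, facePerm_mem_layerStab σ⟩
  invFun e := ⟨vertexPerm hK e.2, vertexPerm_mem_autK hK e.2⟩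
  left_inv σ := Subtype.ext <| Equiv.ext fun x => singleton_injective <| by
    rw [← apply_singleton hK, facePerm_apply, image_singleton]
  right_inv e := Subtype.ext <| Equiv.ext fun v => Subtype.ext <|
    (facePerm_apply _ v).trans (apply_eq_image hK e.2 v).symm
  map_mul' σ τ := Subtype.ext <| Equiv.ext fun v => Subtype.ext <| by
    simp [image_image, Function.comp_def]

end LayerStabilizer

lemma singleton_mem_bdSimplex {n : ℕ} (hn : 1 ≤ n) (x : Fin (n + 1)) :
    {x} ∈ (bdSimplex n).faces := by
  refine ⟨singleton_nonempty x, fun h => ?_⟩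
  have := congrArg card h
  rw [card_singleton, card_univ, Fintype.card_fin] at this
  omega

lemma stabH0_eq_layerStab (n : ℕ) : stabH0 n = layerStab (bdSimplex n) := by
  ext e
  rfl

/-- for `n ≥ 2`, the stabilizer of the layer `H_0` in the
automorphism group of the Hasse diagram of `∂Δⁿ` is isomorphic to
`Aut(∂Δⁿ)`. -/
theorem stab_iso_aut (n : ℕ) (hn : 2 ≤ n) :
    Nonempty (stabH0 n ≃* autK (bdSimplex n)) :=
  ⟨(MulEquiv.subgroupCongr (stabH0_eq_layerStab n)).trans
    (autKEquivLayerStab (singleton_mem_bdSimplex (by omega))).symm⟩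
end

section
/- For n ≥ 2, the automorphism group of the Morse complex of ∂Δⁿ is isomorphic to Aut(∂Δⁿ) × Z/2Z, i.e., to S_{n+1} × Z_2, via (f, i) ↦ f_* ∘ π_*^i, where π_* is the involution induced by the complementation map σ ↦ δ − σ. -/
open Finset

variable {V : Type} [DecidableEq V]

/-!
Every permutation `f` of the vertices and the complementation `π` act on primitive vectors and
preserve gradient vector fields (complementation reverses V-paths); `f_*` commutes with the
involution `π_*`, so `(f, i) ↦ f_* ∘ π_*^i` is a homomorphism, injective by evaluation on
vectors `({a}, {a, b})`.

For surjectivity, two primitive vectors span an edge of the Morse complex iff they share no face,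
so an automorphism `P` of the Morse complex preserves sharing. Three pairwise sharing vectors
share a face, hence `P` maps the vectors through a face `v` to the vectors through a face `g v`,
and `g` is an automorphism of the Hasse diagram such that `P (σ, τ)` has faces `g σ`, `g τ`.
In the Hasse diagram of `∂Δⁿ`, two faces have a unique common neighbour iff they are distinct
of equal cardinality `1` or `n`; so `g`, possibly followed by complementation, maps singletons
to singletons, then preserves cardinality by induction and is induced by a permutation.
-/

/-! ### Primitive vectors -/

/-- A primitive vector is an edge of the Hasse diagram; these are its endpoints. -/
def ends (p : Finset V × Finset V) : Finset (Finset V) := {p.1, p.2}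

@[simp] theorem mem_ends {p : Finset V × Finset V} {v : Finset V} :
    v ∈ ends p ↔ v = p.1 ∨ v = p.2 := by
  simp [ends]

theorem disjoint_ends_iff {p q : Finset V × Finset V} :
    Disjoint (ends p) (ends q) ↔ p.1 ≠ q.1 ∧ p.1 ≠ q.2 ∧ p.2 ≠ q.1 ∧ p.2 ≠ q.2 := by
  simp only [ends, disjoint_insert_right, mem_insert, mem_singleton, not_or,
    disjoint_singleton_right, ne_eq]
  tauto

theorem isDVF_iff {K : SComplex V} {W : Set (Finset V × Finset V)} :
    IsDVF K W ↔
      (∀ p ∈ W, IsPrimitive K p) ∧ W.Pairwise fun p q => Disjoint (ends p) (ends q) := by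
  simp only [IsDVF, Set.Pairwise, disjoint_ends_iff]

namespace IsPrimitive

variable {K : SComplex V} {p q r : Finset V × Finset V} {v w : Finset V}

theorem fst_ne_snd (hp : IsPrimitive K p) : p.1 ≠ p.2 := fun h => by
  have := hp.2.2.2
  rw [h] at this
  omega

theorem mem_faces_of_mem_ends (hp : IsPrimitive K p) (hv : v ∈ ends p) : v ∈ K.faces := by
  rcases mem_ends.1 hv with rfl | rfl
  exacts [hp.1, hp.2.1]

theorem card_ends (hp : IsPrimitive K p) : (ends p).card = 2 :=
  card_pair hp.fst_ne_snd

theorem card_eq_add_one_or (hp : IsPrimitive K p) (hv : v ∈ ends p) (hw : w ∈ ends p)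
    (hvw : v ≠ w) : w.card = v.card + 1 ∨ v.card = w.card + 1 := by
  have := hp.2.2.2
  rw [mem_ends] at hv hw
  rcases hv with rfl | rfl <;> rcases hw with rfl | rfl <;> simp_all

theorem eq_of_ends_eq (hp : IsPrimitive K p) (hq : IsPrimitive K q) (h : ends p = ends q) :
    p = q := by
  have hp1 : p.1 ∈ ends q := h ▸ mem_ends.2 (Or.inl rfl)
  have hp2 : p.2 ∈ ends q := h ▸ mem_ends.2 (Or.inr rfl)
  have hpc := hp.2.2.2
  have := hq.2.2.2
  rw [mem_ends] at hp1 hp2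
  rcases hp1 with h1 | h1 <;> rcases hp2 with h2 | h2
  · exact absurd (h1.trans h2.symm) hp.fst_ne_snd
  · exact Prod.ext h1 h2
  · rw [h1, h2] at hpc; omega
  · exact absurd (h1.trans h2.symm) hp.fst_ne_snd

theorem ends_eq_pair (hp : IsPrimitive K p) (hv : v ∈ ends p) (hw : w ∈ ends p)
    (hvw : v ≠ w) : ends p = {v, w} :=
  (eq_of_subset_of_card_le (insert_subset hv (singleton_subset_iff.2 hw))
    (by rw [hp.card_ends, card_pair hvw])).symm

theorem eq_of_mem_ends (hp : IsPrimitive K p) (hq : IsPrimitive K q)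
    (hvp : v ∈ ends p) (hvq : v ∈ ends q) (hwp : w ∈ ends p) (hwq : w ∈ ends q)
    (hvw : v ≠ w) : p = q :=
  hp.eq_of_ends_eq hq ((hp.ends_eq_pair hvp hwp hvw).trans (hq.ends_eq_pair hvq hwq hvw).symm)

/-- Otherwise the three faces shared by two of them would have pairwise cardinalities differing
by one. -/
theorem exists_mem_ends_of_not_disjoint (hp : IsPrimitive K p) (hq : IsPrimitive K q)
    (hr : IsPrimitive K r) (hpq : ¬Disjoint (ends p) (ends q))
    (hpr : ¬Disjoint (ends p) (ends r)) (hqr : ¬Disjoint (ends q) (ends r)) :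
    ∃ v, v ∈ ends p ∧ v ∈ ends q ∧ v ∈ ends r := by
  simp only [not_disjoint_iff] at hpq hpr hqr
  obtain ⟨u, hup, huq⟩ := hpq
  obtain ⟨v, hvp, hvr⟩ := hpr
  obtain ⟨w, hwq, hwr⟩ := hqr
  by_cases hur : u ∈ ends r
  · exact ⟨u, hup, huq, hur⟩
  by_cases hvq : v ∈ ends q
  · exact ⟨v, hvp, hvq, hvr⟩
  by_cases hwp : w ∈ ends p
  · exact ⟨w, hwp, hwq, hwr⟩
  have := hp.card_eq_add_one_or hup hvp (by rintro rfl; exact hur hvr)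
  have := hq.card_eq_add_one_or huq hwq (by rintro rfl; exact hur hwr)
  have := hr.card_eq_add_one_or hvr hwr (by rintro rfl; exact hvq hwq)
  omega

/-- Two steps `p.1 ⊂ p.2 ⊃ q.1 ⊂ q.2 ⊃ p.1` of a V-path: both `p.2` and `q.2` are
`p.1 ∪ q.1`. -/
theorem snd_eq_of_subset (hp : IsPrimitive K p) (hq : IsPrimitive K q) (hqp : q.1 ⊆ p.2)
    (hpq : p.1 ⊆ q.2) (hcard : p.2.card = q.1.card + 1) (hne : p.1 ≠ q.1) : p.2 = q.2 := by
  obtain ⟨-, -, hp12, hpc⟩ := hp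
  obtain ⟨-, -, hq12, hqc⟩ := hq
  have hlt : p.1.card < (p.1 ∪ q.1).card := by
    refine card_lt_card (Finset.ssubset_iff_subset_ne.2 ⟨subset_union_left, fun h => hne ?_⟩)
    exact (eq_of_subset_of_card_le (h ▸ subset_union_right) (by omega)).symm
  have h1 := eq_of_subset_of_card_le (union_subset hp12 hqp) (by omega)
  have h2 := eq_of_subset_of_card_le (union_subset hpq hq12) (by omega)
  exact h1.symm.trans h2

end IsPrimitive

/-- A V-path in `{p, q}` alternates between `p` and `q`, so two steps of it would give
`p.2 = q.2`. -/
theorem not_hasClosedPath_pair {K : SComplex V} {p q : Finset V × Finset V}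
    (hp : IsPrimitive K p) (hq : IsPrimitive K q) (hpq : Disjoint (ends p) (ends q)) :
    ¬HasClosedPath ({p, q} : Set (Finset V × Finset V)) := by
  rintro ⟨k, α, β, hk, hW, hstep, hcl⟩
  replace hW : ∀ i < k, (α i, β i) = p ∨ (α i, β i) = q := hW
  rw [disjoint_ends_iff] at hpq
  have hα : ∀ i < k, α i = p.1 ∨ α i = q.1 := fun i hi => by
    rcases hW i hi with h | h <;> simp [← h]
  have hk2 : 2 ≤ k := by
    by_contra h
    exact (hstep 0 (by omega)).2.2 (by rw [show 0 + 1 = k by omega, hcl])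
  have hα2 : α 2 = α 0 := by
    rcases (by omega : k = 2 ∨ 2 < k) with rfl | h2
    · exact hcl
    have := (hstep 0 (by omega)).2.2
    have := (hstep 1 (by omega)).2.2
    rcases hα 0 (by omega) with h0 | h0 <;> rcases hα 1 (by omega) with h1 | h1 <;>
      rcases hα 2 h2 with h2 | h2 <;> simp_all
  have hprim : ∀ i < k, IsPrimitive K (α i, β i) := fun i hi => by
    rcases hW i hi with h | h <;> rw [h] <;> assumption
  obtain ⟨h01, hc01, hne01⟩ := hstep 0 (by omega)
  obtain ⟨h12, -, -⟩ := hstep 1 (by omega)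
  have hβ := (hprim 0 (by omega)).snd_eq_of_subset (hprim 1 (by omega)) h01 (hα2 ▸ h12) hc01
    (Ne.symm hne01)
  rcases hW 0 (by omega) with h0 | h0 <;> rcases hW 1 (by omega) with h1 | h1 <;>
    simp_all [Prod.ext_iff]

theorem mem_morse_faces_iff {K : SComplex V} {s : Finset (MVert K)} :
    s ∈ (morse K).faces ↔ s.Nonempty ∧ IsGVF K ((fun x : MVert K => x.val) '' s) :=
  Iff.rfl

theorem pair_mem_morse_faces_iff {K : SComplex V} {p q : MVert K} (hpq : p ≠ q) :
    ({p, q} : Finset (MVert K)) ∈ (morse K).faces ↔ Disjoint (ends p.val) (ends q.val) := by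
  have hval : p.val ≠ q.val := fun h => hpq (Subtype.ext h)
  rw [mem_morse_faces_iff, coe_pair, Set.image_pair]
  refine ⟨fun ⟨_, hW, _⟩ => (isDVF_iff.1 hW).2 (by simp) (by simp) hval, fun h => ?_⟩
  refine ⟨insert_nonempty _ _, isDVF_iff.2 ⟨?_, ?_⟩, not_hasClosedPath_pair p.2 q.2 h⟩
  · rintro r (rfl | rfl)
    exacts [p.2, q.2]
  · exact Set.pairwise_pair.2 fun _ => ⟨h, h.symm⟩

theorem eq_of_ends_apply_eq {K : SComplex V} {P Q : Equiv.Perm (MVert K)}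
    (h : ∀ x, ends (P x).val = ends (Q x).val) : P = Q :=
  Equiv.ext fun x => Subtype.ext ((P x).2.eq_of_ends_eq (Q x).2 (h x))

/-! ### The automorphisms `f_*` and `π_*` of the Morse complex -/

section Induced

variable {K : SComplex V}

theorem mem_autK_of_image_mem {K : SComplex V} {e : Equiv.Perm V}
    (h : ∀ s ∈ K.faces, s.image e ∈ K.faces)
    (h' : ∀ s ∈ K.faces, s.image ⇑e⁻¹ ∈ K.faces) :
    e ∈ autK K :=
  fun s => ⟨h s, fun hs => by simpa [image_image] using h' _ hs⟩

theorem image_mem_morse_faces {P : Equiv.Perm (MVert K)}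
    {m : Finset V × Finset V → Finset V × Finset V} (hPm : ∀ x, (P x).val = m x.val)
    (hm : ∀ W, IsGVF K W → IsGVF K (m '' W)) {s : Finset (MVert K)}
    (hs : s ∈ (morse K).faces) : s.image P ∈ (morse K).faces := by
  rw [mem_morse_faces_iff] at hs ⊢
  refine ⟨hs.1.image _, ?_⟩
  have : (fun x : MVert K => x.val) '' ↑(s.image P) = m '' ((fun x : MVert K => x.val) '' s) := by
    rw [coe_image, Set.image_image, Set.image_image]
    exact congrArg (· '' _) (funext hPm)
  exact this ▸ hm _ hs.2

theorem IsDVF.image {W : Set (Finset V × Finset V)}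
    {m : Finset V × Finset V → Finset V × Finset V} {g : Finset V → Finset V}
    (hg : Function.Injective g) (hends : ∀ p, ends (m p) = (ends p).image g)
    (hprim : ∀ p ∈ W, IsPrimitive K (m p)) (hW : IsDVF K W) : IsDVF K (m '' W) := by
  rw [isDVF_iff] at hW ⊢
  refine ⟨by rintro _ ⟨p, hp, rfl⟩; exact hprim p hp, ?_⟩
  rintro _ ⟨p, hp, rfl⟩ _ ⟨q, hq, rfl⟩ hne
  rw [hends, hends, disjoint_image hg]
  exact hW.2 hp hq fun h => hne (h ▸ rfl)

theorem IsPrimitive.indVert {e : Equiv.Perm V} (he : e ∈ autK K) {p : Finset V × Finset V}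
    (hp : IsPrimitive K p) : IsPrimitive K (indVert e p) :=
  ⟨(he _).1 hp.1, (he _).1 hp.2.1, image_subset_image hp.2.2.1, by
    simp only [_root_.indVert, card_image_of_injective _ e.injective, hp.2.2.2]⟩

theorem ends_indVert (e : V → V) (p : Finset V × Finset V) :
    ends (indVert e p) = (ends p).image (image e) := by
  simp [ends, indVert, image_insert]

theorem indVert_inv_indVert (e : Equiv.Perm V) (p : Finset V × Finset V) :
    indVert ⇑e⁻¹ (indVert e p) = p := by
  simp [indVert, image_image]

theorem HasClosedPath.image_indVert {W : Set (Finset V × Finset V)} {e : V → V}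
    (he : Function.Injective e) (h : HasClosedPath W) : HasClosedPath (indVert e '' W) := by
  obtain ⟨k, α, β, hk, hW, hstep, hcl⟩ := h
  refine ⟨k, fun i => (α i).image e, fun i => (β i).image e, hk,
    fun i hi => ⟨_, hW i hi, rfl⟩, fun i hi => ?_, by simp only [hcl]⟩
  obtain ⟨hsub, hcard, hne⟩ := hstep i hi
  exact ⟨image_subset_image hsub, by simp [card_image_of_injective _ he, hcard],
    (image_injective he).ne hne⟩

theorem IsGVF.image_indVert {W : Set (Finset V × Finset V)} {e : Equiv.Perm V}
    (he : e ∈ autK K) (hW : IsGVF K W) : IsGVF K (indVert e '' W) := by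
  refine ⟨hW.1.image (image_injective e.injective) (ends_indVert e)
    (fun p hp => (hW.1.1 p hp).indVert he), fun h => hW.2 ?_⟩
  have := h.image_indVert e⁻¹.injective
  rwa [Set.image_image, funext (indVert_inv_indVert e), Set.image_id'] at this

/-- The automorphism `e_*` of the Morse complex. -/
def mapPerm {e : Equiv.Perm V} (he : e ∈ autK K) : Equiv.Perm (MVert K) where
  toFun x := ⟨indVert e x.val, x.2.indVert he⟩
  invFun x := ⟨indVert ⇑e⁻¹ x.val, x.2.indVert (inv_mem he)⟩
  left_inv x := Subtype.ext (indVert_inv_indVert e x.val)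
  right_inv x := Subtype.ext (by simpa using indVert_inv_indVert e⁻¹ x.val)

theorem mapPerm_val {e : Equiv.Perm V} (he : e ∈ autK K) (x : MVert K) :
    (mapPerm he x).val = indVert e x.val := rfl

theorem mapPerm_mem_autK {e : Equiv.Perm V} (he : e ∈ autK K) : mapPerm he ∈ autK (morse K) :=
  mem_autK_of_image_mem
    (fun _ => image_mem_morse_faces (mapPerm_val he) fun _ => IsGVF.image_indVert he)
    (fun _ => image_mem_morse_faces (mapPerm_val (inv_mem he)) fun _ =>
      IsGVF.image_indVert (inv_mem he))

variable (K) in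
def morseMap : autK K →* autK (morse K) where
  toFun e := ⟨mapPerm e.2, mapPerm_mem_autK e.2⟩
  map_one' := Subtype.ext <| Equiv.ext fun x => Subtype.ext (by simp [mapPerm_val, indVert])
  map_mul' e f := Subtype.ext <| Equiv.ext fun x => Subtype.ext (by
    simp [mapPerm_val, indVert, image_image])

end Induced

section Ghost

variable [Fintype V] {K : SComplex V}

/-- The complementation map `(σ, τ) ↦ (δ - τ, δ - σ)` on pairs of faces. -/
def complPair (p : Finset V × Finset V) : Finset V × Finset V := (p.2ᶜ, p.1ᶜ)

theorem complPair_complPair (p : Finset V × Finset V) : complPair (complPair p) = p := by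
  simp [complPair]

theorem ends_complPair (p : Finset V × Finset V) : ends (complPair p) = (ends p).image compl := by
  simp [ends, complPair, image_insert, pair_comm]

theorem IsPrimitive.complPair (hK : ∀ s ∈ K.faces, sᶜ ∈ K.faces) {p : Finset V × Finset V}
    (hp : IsPrimitive K p) : IsPrimitive K (_root_.complPair p) := by
  obtain ⟨h1, h2, h12, hc⟩ := hp
  refine ⟨hK _ h2, hK _ h1, compl_subset_compl.2 h12, ?_⟩
  have := card_add_card_compl p.1
  have := card_add_card_compl p.2
  simp only [_root_.complPair]
  omega

/-- Complementation reverses a closed V-path. -/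
theorem HasClosedPath.image_complPair {W : Set (Finset V × Finset V)} (hW : IsDVF K W)
    (h : HasClosedPath W) : HasClosedPath (complPair '' W) := by
  obtain ⟨k, α, β, hk, hmem, hstep, hcl⟩ := h
  have hβ : ∀ i < k, ∀ j < k, α i ≠ α j → β i ≠ β j := fun i hi j hj hne =>
    (disjoint_ends_iff.1 ((isDVF_iff.1 hW).2 (hmem i hi) (hmem j hj) (by simp [hne]))).2.2.2
  -- the reversed path; its value at `k` is forced to close it up
  let α' i := if i = k then (β (k - 1))ᶜ else (β (k - 1 - i))ᶜ
  have hα' : ∀ i < k, α' i = (β (k - 1 - i))ᶜ := fun i hi => if_neg hi.ne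
  refine ⟨k, α', fun i => (α (k - 1 - i))ᶜ, hk, fun i hi => ?_, fun i hi => ?_,
    by simp [α']⟩
  · exact ⟨_, hmem (k - 1 - i) (by omega), by simp [complPair, hα' i hi]⟩
  obtain ⟨j, hj, j', hj', hjj', h1, h2, h3⟩ : ∃ j < k, ∃ j' < k, α (j + 1) = α j' ∧
      α' (i + 1) = (β j)ᶜ ∧ α (k - 1 - i) = α j' ∧ α' i = (β j')ᶜ := by
    rcases (by omega : i + 1 = k ∨ i + 1 < k) with hik | hik
    · have hi0 : k - 1 - i = 0 := by omega
      exact ⟨k - 1, by omega, 0, by omega, by rw [Nat.sub_add_cancel hk, hcl],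
        by simp [α', hik], by rw [hi0], by rw [hα' i hi, hi0]⟩
    · exact ⟨k - 1 - (i + 1), by omega, k - 1 - i, by omega,
        by rw [show k - 1 - (i + 1) + 1 = k - 1 - i by omega], hα' _ hik, rfl, hα' i hi⟩
  obtain ⟨hsub, hcard, hne⟩ := hstep j hj
  dsimp only
  rw [h1, h2, h3, ← hjj']
  refine ⟨compl_subset_compl.2 hsub, ?_,
    fun h => hβ j hj j' hj' (hjj' ▸ hne.symm) (compl_injective h)⟩
  have := card_add_card_compl (β j)
  have := card_add_card_compl (α (j + 1))
  omega

theorem IsGVF.image_complPair (hK : ∀ s ∈ K.faces, sᶜ ∈ K.faces)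
    {W : Set (Finset V × Finset V)} (hW : IsGVF K W) : IsGVF K (complPair '' W) := by
  have hdvf : IsDVF K (complPair '' W) :=
    hW.1.image compl_injective ends_complPair fun p hp => (hW.1.1 p hp).complPair hK
  refine ⟨hdvf, fun h => hW.2 ?_⟩
  have := h.image_complPair hdvf
  rwa [Set.image_image, funext complPair_complPair, Set.image_id'] at this

/-- The ghost automorphism `π_*` of the Morse complex. -/
def ghost (hK : ∀ s ∈ K.faces, sᶜ ∈ K.faces) : Equiv.Perm (MVert K) :=
  Function.Involutive.toPerm (fun x => ⟨complPair x.val, x.2.complPair hK⟩)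
    fun x => Subtype.ext (complPair_complPair x.val)

theorem ghost_val (hK : ∀ s ∈ K.faces, sᶜ ∈ K.faces) (x : MVert K) :
    (ghost hK x).val = complPair x.val := rfl

theorem ghost_inv (hK : ∀ s ∈ K.faces, sᶜ ∈ K.faces) : (ghost hK)⁻¹ = ghost hK :=
  Function.Involutive.toPerm_symm _

theorem ghost_mem_autK (hK : ∀ s ∈ K.faces, sᶜ ∈ K.faces) :
    ghost hK ∈ autK (morse K) := by
  have h : ∀ s ∈ (morse K).faces, s.image (ghost hK) ∈ (morse K).faces :=
    fun _ => image_mem_morse_faces (ghost_val hK) fun _ => IsGVF.image_complPair hK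
  exact mem_autK_of_image_mem h (ghost_inv hK ▸ h)

theorem Equiv.Perm.image_compl (e : Equiv.Perm V) (s : Finset V) :
    sᶜ.image e = (s.image e)ᶜ := by
  ext b
  simp only [mem_image, mem_compl]
  constructor
  · rintro ⟨a, ha, rfl⟩ ⟨a', ha', h⟩
    exact ha (e.injective h ▸ ha')
  · exact fun hb => ⟨e.symm b, fun h => hb ⟨_, h, by simp⟩, by simp⟩

theorem mapPerm_mul_ghost {e : Equiv.Perm V} (he : e ∈ autK K)
    (hK : ∀ s ∈ K.faces, sᶜ ∈ K.faces) : mapPerm he * ghost hK = ghost hK * mapPerm he :=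
  Equiv.ext fun x => Subtype.ext <| by
    simp [mapPerm_val, ghost_val, indVert, complPair, Equiv.Perm.image_compl]

variable (K) in
def ghostHom (hK : ∀ s ∈ K.faces, sᶜ ∈ K.faces) :
    Multiplicative (ZMod 2) →* autK (morse K) where
  toFun i := ⟨ghost hK, ghost_mem_autK hK⟩ ^ (Multiplicative.toAdd i).val
  map_one' := pow_zero _
  map_mul' i j := by
    have h2 : (⟨ghost hK, ghost_mem_autK hK⟩ : autK (morse K)) ^ 2 = 1 :=
      Subtype.ext (by rw [pow_two]; exact mul_eq_one_iff_eq_inv.2 (ghost_inv hK).symm)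
    rw [← pow_add, toAdd_mul, ZMod.val_add, ← pow_eq_pow_mod _ h2]

variable (K) in
/-- `(f, i) ↦ f_* ∘ π_*^i`. -/
def morseAutHom (hK : ∀ s ∈ K.faces, sᶜ ∈ K.faces) :
    autK K × Multiplicative (ZMod 2) →* autK (morse K) :=
  (morseMap K).noncommCoprod (ghostHom K hK) fun e i => by
    refine Commute.pow_right (Subtype.ext ?_) _
    exact mapPerm_mul_ghost e.2 hK

theorem morseAutHom_one_val (hK : ∀ s ∈ K.faces, sᶜ ∈ K.faces) (e : autK K) :
    (morseAutHom K hK (e, 1) : Equiv.Perm (MVert K)) = mapPerm e.2 := by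
  simp [morseAutHom, ghostHom, morseMap]

theorem morseAutHom_ofAdd_one_val (hK : ∀ s ∈ K.faces, sᶜ ∈ K.faces) (e : autK K) :
    (morseAutHom K hK (e, Multiplicative.ofAdd 1) : Equiv.Perm (MVert K)) =
      mapPerm e.2 * ghost hK := by
  simp [morseAutHom, ghostHom, morseMap, ZMod.val_one]

end Ghost

/-! ### From automorphisms of the Morse complex to automorphisms of the Hasse diagram -/

section StarMap

variable {K : SComplex V}

theorem hasse_adj_iff_exists_ends {v w : {s // s ∈ K.faces}} :
    (hasse K).Adj v w ↔ ∃ r : MVert K, ends r.val = {v.1, w.1} := by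
  constructor
  · rintro (⟨h, hc⟩ | ⟨h, hc⟩)
    · exact ⟨⟨(v.1, w.1), v.2, w.2, h, hc⟩, rfl⟩
    · exact ⟨⟨(w.1, v.1), w.2, v.2, h, hc⟩, pair_comm _ _⟩
  · rintro ⟨r, hr⟩
    have hvw : v.1 ≠ w.1 := fun h => by
      have := r.2.card_ends
      rw [hr, h] at this
      simp at this
    have hv : v.1 ∈ ends r.val := hr ▸ mem_insert_self _ _
    have hw : w.1 ∈ ends r.val := hr ▸ mem_insert_of_mem (mem_singleton_self _)
    obtain ⟨-, -, hsub, hc⟩ := r.2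
    rcases mem_ends.1 hv with h1 | h1 <;> rcases mem_ends.1 hw with h2 | h2
    · exact absurd (h1.trans h2.symm) hvw
    · exact Or.inl ⟨h1 ▸ h2 ▸ hsub, h1 ▸ h2 ▸ hc⟩
    · exact Or.inr ⟨h1 ▸ h2 ▸ hsub, h1 ▸ h2 ▸ hc⟩
    · exact absurd (h1.trans h2.symm) hvw

theorem exists_ne_mem_ends_of_nontrivial (hK : ∀ v, ((hasse K).neighborSet v).Nontrivial)
    (v : {s // s ∈ K.faces}) :
    ∃ p q : MVert K, p ≠ q ∧ v.1 ∈ ends p.val ∧ v.1 ∈ ends q.val := by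
  obtain ⟨w, hw, w', hw', hne⟩ := hK v
  obtain ⟨p, hp⟩ := hasse_adj_iff_exists_ends.1 hw
  obtain ⟨q, hq⟩ := hasse_adj_iff_exists_ends.1 hw'
  refine ⟨p, q, fun h => hne ?_, by simp [hp], by simp [hq]⟩
  have hvw : v.1 ≠ w.1 := fun h => (hasse K).ne_of_adj hw (Subtype.ext h)
  have : w.1 ∈ ({v.1, w'.1} : Finset _) :=
    hq ▸ h ▸ hp ▸ mem_insert_of_mem (mem_singleton_self _)
  exact Subtype.ext ((mem_insert.1 this).resolve_left hvw.symm |> mem_singleton.1)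

theorem not_disjoint_ends_apply_iff {P : Equiv.Perm (MVert K)} (hP : P ∈ autK (morse K))
    (p q : MVert K) :
    ¬Disjoint (ends (P p).val) (ends (P q).val) ↔ ¬Disjoint (ends p.val) (ends q.val) := by
  rcases eq_or_ne p q with rfl | hpq
  · simp [ends]
  rw [not_iff_not, ← pair_mem_morse_faces_iff hpq,
    ← pair_mem_morse_faces_iff (P.injective.ne hpq), hP {p, q}, image_insert, image_singleton]

variable {P : Equiv.Perm (MVert K)}

/-- Any two vectors through `v` meet, hence so do their images, and three pairwise meeting
vectors share a face. -/
theorem exists_forall_mem_ends_apply (hK : ∀ v, ((hasse K).neighborSet v).Nontrivial)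
    (hP : P ∈ autK (morse K)) (v : {s // s ∈ K.faces}) :
    ∃ w : {s // s ∈ K.faces}, ∀ r : MVert K,
      v.1 ∈ ends r.val → w.1 ∈ ends (P r).val := by
  obtain ⟨p, q, hpq, hp, hq⟩ := exists_ne_mem_ends_of_nontrivial hK v
  have hmeet : ∀ r s : MVert K, v.1 ∈ ends r.val → v.1 ∈ ends s.val →
      ¬Disjoint (ends (P r).val) (ends (P s).val) := fun r s hr hs =>
    (not_disjoint_ends_apply_iff hP r s).2 (not_disjoint_iff.2 ⟨_, hr, hs⟩)
  obtain ⟨w, hwp, hwq⟩ := not_disjoint_iff.1 (hmeet p q hp hq)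
  refine ⟨⟨w, (P p).2.mem_faces_of_mem_ends hwp⟩, fun r hr => ?_⟩
  obtain ⟨u, hup, huq, hur⟩ := (P p).2.exists_mem_ends_of_not_disjoint (P q).2 (P r).2
    (hmeet p q hp hq) (hmeet p r hp hr) (hmeet q r hq hr)
  by_contra hwr
  exact P.injective.ne hpq <| Subtype.ext <|
    (P p).2.eq_of_mem_ends (P q).2 hup huq hwp hwq fun h => hwr (h ▸ hur)

noncomputable def starMap (hK : ∀ v, ((hasse K).neighborSet v).Nontrivial)
    (hP : P ∈ autK (morse K)) (v : {s // s ∈ K.faces}) : {s // s ∈ K.faces} :=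
  (exists_forall_mem_ends_apply hK hP v).choose

theorem mem_ends_starMap (hK : ∀ v, ((hasse K).neighborSet v).Nontrivial)
    (hP : P ∈ autK (morse K)) {v : {s // s ∈ K.faces}} {r : MVert K} (hr : v.1 ∈ ends r.val) :
    (starMap hK hP v).1 ∈ ends (P r).val :=
  (exists_forall_mem_ends_apply hK hP v).choose_spec r hr

theorem starMap_starMap {Q : Equiv.Perm (MVert K)}
    (hK : ∀ v, ((hasse K).neighborSet v).Nontrivial) (hP : P ∈ autK (morse K))
    (hQ : Q ∈ autK (morse K)) (hQP : ∀ x, Q (P x) = x)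
    (v : {s // s ∈ K.faces}) : starMap hK hQ (starMap hK hP v) = v := by
  obtain ⟨p, q, hpq, hp, hq⟩ := exists_ne_mem_ends_of_nontrivial hK v
  have hp' := mem_ends_starMap hK hQ (mem_ends_starMap hK hP hp)
  have hq' := mem_ends_starMap hK hQ (mem_ends_starMap hK hP hq)
  rw [hQP] at hp' hq'
  by_contra h
  exact hpq (Subtype.ext (p.2.eq_of_mem_ends q.2 hp' hq' hp hq fun h' => h (Subtype.ext h')))

theorem ends_apply_eq_pair (hK : ∀ v, ((hasse K).neighborSet v).Nontrivial)
    (hP : P ∈ autK (morse K)) {r : MVert K} {v w : {s // s ∈ K.faces}}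
    (h : ends r.val = {v.1, w.1}) :
    ends (P r).val = {(starMap hK hP v).1, (starMap hK hP w).1} := by
  have hvw : v ≠ w := fun hvw => by
    have := r.2.card_ends
    rw [h, hvw] at this
    simp at this
  refine (P r).2.ends_eq_pair (mem_ends_starMap hK hP (by simp [h]))
    (mem_ends_starMap hK hP (by simp [h])) fun h' => hvw ?_
  have := congrArg (starMap hK (inv_mem hP)) (Subtype.ext h')
  rwa [starMap_starMap hK hP (inv_mem hP) P.symm_apply_apply,
    starMap_starMap hK hP (inv_mem hP) P.symm_apply_apply] at this

theorem hasse_adj_starMap (hK : ∀ v, ((hasse K).neighborSet v).Nontrivial)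
    (hP : P ∈ autK (morse K)) {v w : {s // s ∈ K.faces}} (h : (hasse K).Adj v w) :
    (hasse K).Adj (starMap hK hP v) (starMap hK hP w) := by
  obtain ⟨r, hr⟩ := hasse_adj_iff_exists_ends.1 h
  exact hasse_adj_iff_exists_ends.2 ⟨P r, ends_apply_eq_pair hK hP hr⟩

noncomputable def hasseIso (hK : ∀ v, ((hasse K).neighborSet v).Nontrivial)
    (hP : P ∈ autK (morse K)) : hasse K ≃g hasse K where
  toFun := starMap hK hP
  invFun := starMap hK (inv_mem hP)
  left_inv := starMap_starMap hK hP (inv_mem hP) P.symm_apply_apply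
  right_inv := starMap_starMap hK (inv_mem hP) hP P.apply_symm_apply
  map_rel_iff' {v w} := ⟨fun h => by
    simpa [starMap_starMap hK hP (inv_mem hP) P.symm_apply_apply] using
      hasse_adj_starMap hK (inv_mem hP) h, hasse_adj_starMap hK hP⟩

end StarMap

/-! ### The Hasse diagram of `∂Δⁿ` -/

def SimpleGraph.HasUniqueCommonNeighbor {α : Type} (G : SimpleGraph α) (v w : α) : Prop :=
  v ≠ w ∧ ∃! u, G.Adj u v ∧ G.Adj u w

theorem SimpleGraph.Iso.hasUniqueCommonNeighbor_iff {α β : Type} {G : SimpleGraph α}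
    {G' : SimpleGraph β} (φ : G ≃g G') {v w : α} :
    G'.HasUniqueCommonNeighbor (φ v) (φ w) ↔ G.HasUniqueCommonNeighbor v w :=
  and_congr φ.injective.ne_iff (φ.toEquiv.existsUnique_congr fun _ =>
    (and_congr φ.map_adj_iff φ.map_adj_iff).symm).symm

theorem card_eq_add_one_or_of_hasse_adj {K : SComplex V} {v w : {s // s ∈ K.faces}}
    (h : (hasse K).Adj v w) : w.1.card = v.1.card + 1 ∨ v.1.card = w.1.card + 1 := by
  rcases h with ⟨-, h⟩ | ⟨-, h⟩ <;> omega

def complIso [Fintype V] {K : SComplex V} (hK : ∀ s ∈ K.faces, sᶜ ∈ K.faces) :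
    hasse K ≃g hasse K where
  toFun v := ⟨v.1ᶜ, hK _ v.2⟩
  invFun v := ⟨v.1ᶜ, hK _ v.2⟩
  left_inv v := Subtype.ext (compl_compl _)
  right_inv v := Subtype.ext (compl_compl _)
  map_rel_iff' {v w} := by
    have := card_add_card_compl v.1
    have := card_add_card_compl w.1
    have e1 : (w.1ᶜ.card = v.1ᶜ.card + 1 ↔ v.1.card = w.1.card + 1) := by omega
    have e2 : (v.1ᶜ.card = w.1ᶜ.card + 1 ↔ w.1.card = v.1.card + 1) := by omega
    simp only [hasse, Equiv.coe_fn_mk, compl_subset_compl, e1, e2]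
    exact or_comm

theorem Finset.card_inter_lt_of_ne {α : Type} [DecidableEq α] {s t : Finset α} (hst : s ≠ t)
    (hc : s.card = t.card) : (s ∩ t).card < s.card := by
  by_contra h
  have h1 := eq_of_subset_of_card_le (inter_subset_left : s ∩ t ⊆ s) (by omega)
  have h2 := eq_of_subset_of_card_le (inter_subset_right : s ∩ t ⊆ t) (by omega)
  exact hst (h1.symm.trans h2)

theorem Finset.exists_ne_subset_subset {α : Type} [DecidableEq α] {s u t : Finset α}
    (hsu : s ⊆ u) (hut : u ⊆ t) (hu : u.card = s.card + 1) (ht : t.card = u.card + 1) :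
    ∃ u', u' ≠ u ∧ s ⊆ u' ∧ u' ⊆ t ∧ u'.card = s.card + 1 := by
  obtain ⟨y, hy⟩ : (t \ u).Nonempty := by
    rw [← card_pos, card_sdiff_of_subset hut]
    omega
  rw [mem_sdiff] at hy
  have hys : y ∉ s := fun h => hy.2 (hsu h)
  exact ⟨insert y s, fun h => hy.2 (h ▸ mem_insert_self y s), subset_insert _ _,
    insert_subset hy.1 (hsu.trans hut), card_insert_of_notMem hys⟩

theorem subset_of_hasse_adj_s19 {K : SComplex V} {v w : {s // s ∈ K.faces}} (h : (hasse K).Adj v w)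
    (hlt : v.1.card < w.1.card) : v.1 ⊆ w.1 := by
  rcases h with ⟨h, -⟩ | ⟨-, h⟩
  · exact h
  · omega

section BdSimplex

variable {n : ℕ}

abbrev BdFace (n : ℕ) : Type := {s : Finset (Fin (n + 1)) // s ∈ (bdSimplex n).faces}

theorem mem_bdSimplex_faces_iff {s : Finset (Fin (n + 1))} :
    s ∈ (bdSimplex n).faces ↔ 1 ≤ s.card ∧ s.card ≤ n := by
  have := card_le_univ s
  rw [Fintype.card_fin] at this
  show s.Nonempty ∧ s ≠ univ ↔ _
  rw [← card_pos, Ne, ← card_eq_iff_eq_univ, Fintype.card_fin]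
  omega

theorem compl_mem_bdSimplex_faces (n : ℕ) :
    ∀ s ∈ (bdSimplex n).faces, sᶜ ∈ (bdSimplex n).faces := fun s hs => by
  have := card_add_card_compl s
  rw [Fintype.card_fin] at this
  rw [mem_bdSimplex_faces_iff] at hs ⊢
  omega

theorem singleton_mem_bdSimplex_faces (hn : 1 ≤ n) (a : Fin (n + 1)) :
    {a} ∈ (bdSimplex n).faces :=
  mem_bdSimplex_faces_iff.2 (by rw [card_singleton]; omega)

theorem neighborSet_hasse_bdSimplex_nontrivial (hn : 2 ≤ n) (v : BdFace n) :
    ((hasse (bdSimplex n)).neighborSet v).Nontrivial := by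
  obtain ⟨hv1, hvn⟩ := mem_bdSimplex_faces_iff.1 v.2
  rcases (by omega : 2 ≤ v.1.card ∨ v.1.card = 1) with hv | hv
  · obtain ⟨x, hx, y, hy, hxy⟩ := one_lt_card.1 hv
    have hmem : ∀ z ∈ v.1, v.1.erase z ∈ (bdSimplex n).faces := fun z hz =>
      mem_bdSimplex_faces_iff.2 (by rw [card_erase_of_mem hz]; omega)
    have hadj : ∀ z (hz : z ∈ v.1), (hasse (bdSimplex n)).Adj v ⟨_, hmem z hz⟩ :=
      fun z hz => Or.inr ⟨erase_subset _ _, by rw [card_erase_of_mem hz]; omega⟩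
    refine ⟨_, hadj x hx, _, hadj y hy, fun h => ?_⟩
    have : y ∈ v.1.erase x := mem_erase.2 ⟨Ne.symm hxy, hy⟩
    rw [show v.1.erase x = v.1.erase y from congrArg Subtype.val h] at this
    simp at this
  · have hc : 1 < v.1ᶜ.card := by
      have := card_add_card_compl v.1
      rw [Fintype.card_fin] at this
      omega
    obtain ⟨x, hx, y, hy, hxy⟩ := one_lt_card.1 hc
    rw [mem_compl] at hx hy
    have hmem : ∀ z ∉ v.1, insert z v.1 ∈ (bdSimplex n).faces := fun z hz =>
      mem_bdSimplex_faces_iff.2 (by rw [card_insert_of_notMem hz]; omega)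
    have hadj : ∀ z (hz : z ∉ v.1), (hasse (bdSimplex n)).Adj v ⟨_, hmem z hz⟩ :=
      fun z hz => Or.inl ⟨subset_insert _ _, card_insert_of_notMem hz⟩
    refine ⟨_, hadj x hx, _, hadj y hy, fun h => ?_⟩
    have : x ∈ insert y v.1 :=
      (show insert x v.1 = insert y v.1 from congrArg Subtype.val h) ▸ mem_insert_self x v.1
    simp [hxy, hx] at this

theorem hasUniqueCommonNeighbor_of_card_eq_one (hn : 2 ≤ n) {v w : BdFace n} (hne : v ≠ w)
    (hv : v.1.card = 1) (hw : w.1.card = 1) :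
    (hasse (bdSimplex n)).HasUniqueCommonNeighbor v w := by
  have hlt := card_inter_lt_of_ne (fun h => hne (Subtype.ext h)) (hv.trans hw.symm)
  have hcui := card_union_add_card_inter v.1 w.1
  have hu : v.1 ∪ w.1 ∈ (bdSimplex n).faces := mem_bdSimplex_faces_iff.2 (by omega)
  have hcu : (v.1 ∪ w.1).card = 2 := by omega
  refine ⟨hne, ⟨_, hu⟩, ⟨Or.inr ⟨subset_union_left, by rw [hcu, hv]⟩,
    Or.inr ⟨subset_union_right, by rw [hcu, hw]⟩⟩, fun u ⟨huv, huw⟩ => ?_⟩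
  have hu1 := (mem_bdSimplex_faces_iff.1 u.2).1
  rcases huv with ⟨-, h⟩ | ⟨hvu, h⟩
  · omega
  rcases huw with ⟨-, h'⟩ | ⟨hwu, -⟩
  · omega
  exact Subtype.ext (eq_of_subset_of_card_le (union_subset hvu hwu) (by omega)).symm

theorem card_eq_of_hasUniqueCommonNeighbor {v w : BdFace n}
    (h : (hasse (bdSimplex n)).HasUniqueCommonNeighbor v w) :
    v.1.card = w.1.card ∧ (v.1.card = 1 ∨ v.1.card = n) := by
  obtain ⟨hne, u, ⟨huv, huw⟩, huniq⟩ := h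
  have hne' : v.1 ≠ w.1 := fun h => hne (Subtype.ext h)
  have hcui := card_union_add_card_inter v.1 w.1
  have hv := mem_bdSimplex_faces_iff.1 v.2
  have hw := mem_bdSimplex_faces_iff.1 w.2
  have key : ∀ u' ∈ (bdSimplex n).faces,
      (u' ⊆ v.1 ∧ v.1.card = u'.card + 1 ∨ v.1 ⊆ u' ∧ u'.card = v.1.card + 1) →
      (u' ⊆ w.1 ∧ w.1.card = u'.card + 1 ∨ w.1 ⊆ u' ∧ u'.card = w.1.card + 1) →
      u' = u.1 :=
    fun u' hu' h1 h2 => congrArg Subtype.val (huniq ⟨u', hu'⟩ ⟨h1, h2⟩)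
  rcases huv with ⟨huv, hcv⟩ | ⟨hvu, hcv⟩ <;>
    rcases huw with ⟨huw, hcw⟩ | ⟨hwu, hcw⟩
  · -- `v ∪ w` would be a second common neighbour
    refine ⟨by omega, or_iff_not_imp_left.2 fun _ => ?_⟩
    have hlt := card_inter_lt_of_ne hne' (by omega)
    have hle := card_le_card (subset_inter huv huw)
    by_contra
    have hU : v.1 ∪ w.1 ∈ (bdSimplex n).faces := mem_bdSimplex_faces_iff.2 (by omega)
    have hUu := key _ hU (Or.inr ⟨subset_union_left, by omega⟩)
      (Or.inr ⟨subset_union_right, by omega⟩)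
    have := congrArg card hUu
    omega
  · obtain ⟨u', hne, hwu', hu'v, hc⟩ := exists_ne_subset_subset hwu huv hcw hcv
    exact absurd (key u' (mem_bdSimplex_faces_iff.2 (by omega)) (Or.inl ⟨hu'v, by omega⟩)
      (Or.inr ⟨hwu', hc⟩)) hne
  · obtain ⟨u', hne, hvu', hu'w, hc⟩ := exists_ne_subset_subset hvu huw hcv hcw
    exact absurd (key u' (mem_bdSimplex_faces_iff.2 (by omega)) (Or.inr ⟨hvu', hc⟩)
      (Or.inl ⟨hu'w, by omega⟩)) hne
  · -- `v ∩ w` would be a second common neighbour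
    refine ⟨by omega, Or.inl ?_⟩
    have hlt := card_inter_lt_of_ne hne' (by omega)
    have hle := card_le_card (union_subset hvu hwu)
    by_contra
    have hI : v.1 ∩ w.1 ∈ (bdSimplex n).faces := mem_bdSimplex_faces_iff.2 (by omega)
    have hIu := key _ hI (Or.inl ⟨inter_subset_left, by omega⟩)
      (Or.inl ⟨inter_subset_right, by omega⟩)
    have := congrArg card hIu
    omega

theorem hasUniqueCommonNeighbor_hasse_bdSimplex_iff (hn : 2 ≤ n) {v w : BdFace n} :
    (hasse (bdSimplex n)).HasUniqueCommonNeighbor v w ↔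
      v ≠ w ∧ v.1.card = w.1.card ∧ (v.1.card = 1 ∨ v.1.card = n) := by
  refine ⟨fun h => ⟨h.1, card_eq_of_hasUniqueCommonNeighbor h⟩, ?_⟩
  rintro ⟨hne, hc, h1 | hvn⟩
  · exact hasUniqueCommonNeighbor_of_card_eq_one hn hne h1 (hc ▸ h1)
  · let c := complIso (compl_mem_bdSimplex_faces n)
    have hcard : ∀ x : BdFace n, x.1.card = n → (c x).1.card = 1 := fun x hx => by
      have := card_add_card_compl x.1
      rw [Fintype.card_fin] at this
      show x.1ᶜ.card = 1
      omega
    exact c.hasUniqueCommonNeighbor_iff.1 (hasUniqueCommonNeighbor_of_card_eq_one hn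
      (c.injective.ne hne) (hcard v hvn) (hcard w (hc ▸ hvn)))

theorem erase_mem_bdSimplex_faces {v : BdFace n} (hv : 2 ≤ v.1.card) {x : Fin (n + 1)}
    (hx : x ∈ v.1) : v.1.erase x ∈ (bdSimplex n).faces := by
  have := mem_bdSimplex_faces_iff.1 v.2
  exact mem_bdSimplex_faces_iff.2 (by rw [card_erase_of_mem hx]; omega)

theorem exists_ne_card_eq (v : BdFace n) : ∃ w : BdFace n, w ≠ v ∧ w.1.card = v.1.card := by
  obtain ⟨⟨a, ha⟩, hv⟩ : v.1.Nonempty ∧ v.1 ≠ univ := v.2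
  obtain ⟨b, hb⟩ : ∃ b, b ∉ v.1 := by
    by_contra! h
    exact hv (eq_univ_of_forall h)
  have hc : (insert b (v.1.erase a)).card = v.1.card := by
    rw [card_insert_of_notMem fun h => hb (mem_of_mem_erase h), card_erase_of_mem ha]
    have := card_pos.2 ⟨a, ha⟩
    omega
  refine ⟨⟨_, mem_bdSimplex_faces_iff.2 (hc ▸ mem_bdSimplex_faces_iff.1 v.2)⟩,
    fun h => hb ?_, hc⟩
  exact (show insert b (v.1.erase a) = v.1 from congrArg Subtype.val h) ▸ mem_insert_self b _

theorem exists_hasUniqueCommonNeighbor_iff (hn : 2 ≤ n) (v : BdFace n) :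
    (∃ w, (hasse (bdSimplex n)).HasUniqueCommonNeighbor v w) ↔
      v.1.card = 1 ∨ v.1.card = n := by
  refine ⟨fun ⟨w, h⟩ => ((hasUniqueCommonNeighbor_hasse_bdSimplex_iff hn).1 h).2.2,
    fun h => ?_⟩
  obtain ⟨w, hw, hc⟩ := exists_ne_card_eq v
  exact ⟨w, (hasUniqueCommonNeighbor_hasse_bdSimplex_iff hn).2 ⟨hw.symm, hc.symm, h⟩⟩

section Iso

variable (φ : hasse (bdSimplex n) ≃g hasse (bdSimplex n))

theorem card_apply_eq_one_or (hn : 2 ≤ n) {v : BdFace n} (hv : v.1.card = 1 ∨ v.1.card = n) :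
    (φ v).1.card = 1 ∨ (φ v).1.card = n := by
  rw [← exists_hasUniqueCommonNeighbor_iff hn] at hv ⊢
  obtain ⟨w, hw⟩ := hv
  exact ⟨φ w, φ.hasUniqueCommonNeighbor_iff.2 hw⟩

/-- Among faces of cardinality `1` or `n`, having the same cardinality is having a unique common
neighbour, which Hasse automorphisms preserve. -/
theorem card_apply_eq_card_apply_iff (hn : 2 ≤ n) {v w : BdFace n}
    (hv : v.1.card = 1 ∨ v.1.card = n) (hvw : v ≠ w) :
    (φ v).1.card = (φ w).1.card ↔ v.1.card = w.1.card := by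
  have h := φ.hasUniqueCommonNeighbor_iff (v := v) (w := w)
  rw [hasUniqueCommonNeighbor_hasse_bdSimplex_iff hn,
    hasUniqueCommonNeighbor_hasse_bdSimplex_iff hn] at h
  simpa [φ.injective.ne hvw, hvw, card_apply_eq_one_or φ hn hv, hv] using h

theorem card_apply_eq_of_forall_lt {k : ℕ} (hk : 2 ≤ k)
    (ih : ∀ j < k, ∀ v : BdFace n, v.1.card = j →
      (φ v).1.card = j ∧ (φ.symm v).1.card = j)
    {v : BdFace n} (hv : v.1.card = k) : (φ v).1.card = k := by
  obtain ⟨x, hx⟩ := card_pos.1 (by omega : 0 < v.1.card)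
  let u : BdFace n := ⟨_, erase_mem_bdSimplex_faces (hv ▸ hk) hx⟩
  have hu : u.1.card = k - 1 := by simp [u, card_erase_of_mem hx, hv]
  have hφu := (ih (k - 1) (by omega) u hu).1
  have hadj := φ.map_adj_iff.2 (show (hasse (bdSimplex n)).Adj u v from
    Or.inl ⟨erase_subset _ _, by omega⟩)
  rcases card_eq_add_one_or_of_hasse_adj hadj with h | h
  · omega
  · have := (ih (k - 2) (by omega) (φ v) (by omega)).2
    rw [φ.symm_apply_apply] at this
    omega

theorem card_apply_eq_of_card_eq_one
    (h : ∀ v : BdFace n, v.1.card = 1 → (φ v).1.card = 1)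
    (h' : ∀ v : BdFace n, v.1.card = 1 → (φ.symm v).1.card = 1) (v : BdFace n) :
    (φ v).1.card = v.1.card := by
  suffices ∀ k, ∀ v : BdFace n, v.1.card = k →
      (φ v).1.card = k ∧ (φ.symm v).1.card = k from (this _ v rfl).1
  intro k
  induction k using Nat.strong_induction_on with
  | _ k ih =>
    intro v hv
    have := (mem_bdSimplex_faces_iff.1 v.2).1
    rcases (by omega : k = 1 ∨ 2 ≤ k) with rfl | hk
    · exact ⟨h v hv, h' v hv⟩
    · exact ⟨card_apply_eq_of_forall_lt φ hk ih hv,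
        card_apply_eq_of_forall_lt φ.symm hk (fun j hj w hw => (ih j hj w hw).symm) hv⟩

theorem exists_perm_of_card_apply_eq (hn : 1 ≤ n) (hφ : ∀ v, (φ v).1.card = v.1.card) :
    ∃ f : Equiv.Perm (Fin (n + 1)), ∀ v, (φ v).1 = v.1.image f := by
  let sing (a : Fin (n + 1)) : BdFace n := ⟨{a}, singleton_mem_bdSimplex_faces hn a⟩
  choose f hf using fun a => card_eq_one.1 ((hφ (sing a)).trans (card_singleton a))
  have hinj : Function.Injective f := fun a b hab => by
    have := φ.injective (Subtype.ext (by rw [hf, hf, hab]) : φ (sing a) = φ (sing b))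
    exact singleton_injective (congrArg Subtype.val this)
  refine ⟨Equiv.ofBijective f (Finite.injective_iff_bijective.1 hinj), fun v => ?_⟩
  induction hk : v.1.card using Nat.strong_induction_on generalizing v with
  | _ k ih =>
    have := (mem_bdSimplex_faces_iff.1 v.2).1
    rcases (by omega : k = 1 ∨ 2 ≤ k) with rfl | hk2
    · obtain ⟨a, ha⟩ := card_eq_one.1 hk
      have : v = sing a := Subtype.ext ha
      subst this
      simp [hf, ha]
    refine (eq_of_subset_of_card_le (fun b hb => ?_) ?_).symm
    · obtain ⟨x, hx, rfl⟩ := mem_image.1 hb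
      obtain ⟨y, hy, hyx⟩ := exists_mem_ne (by omega : 1 < v.1.card) x
      let u : BdFace n := ⟨_, erase_mem_bdSimplex_faces (hk ▸ hk2) hy⟩
      have hu : u.1.card = k - 1 := by simp [u, card_erase_of_mem hy, hk]
      have hsub : (φ u).1 ⊆ (φ v).1 := subset_of_hasse_adj_s19
        (φ.map_adj_iff.2 (Or.inl ⟨erase_subset _ _, by omega⟩)) (by rw [hφ, hφ]; omega)
      exact hsub (ih (k - 1) (by omega) u hu ▸
        mem_image_of_mem _ (mem_erase.2 ⟨hyx.symm, hx⟩))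
    · rw [card_image_of_injective _ (Equiv.injective _), hφ]

end Iso

theorem exists_perm_of_card_apply_singleton (φ : hasse (bdSimplex n) ≃g hasse (bdSimplex n))
    (hn : 2 ≤ n) {s : BdFace n} (hs : s.1.card = 1) (hφs : (φ s).1.card = 1) :
    ∃ f : Equiv.Perm (Fin (n + 1)), ∀ v, (φ v).1 = v.1.image f := by
  have hsing : ∀ v : BdFace n, v.1.card = 1 → (φ v).1.card = 1 := fun v hv => by
    rcases eq_or_ne v s with rfl | hvs
    · exact hφs
    · rw [(card_apply_eq_card_apply_iff φ hn (Or.inl hv) hvs).2 (hv.trans hs.symm), hφs]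
  have hsing' : ∀ v : BdFace n, v.1.card = 1 → (φ.symm v).1.card = 1 := fun v hv => by
    by_contra h
    have hne : φ.symm v ≠ s := fun h' => h (h' ▸ hs)
    have hext := card_apply_eq_one_or φ.symm hn (Or.inl hv)
    refine h ((card_apply_eq_card_apply_iff φ hn hext hne).1 ?_ |>.trans hs)
    rw [φ.apply_symm_apply, hv, hφs]
  exact exists_perm_of_card_apply_eq φ (by omega) (card_apply_eq_of_card_eq_one φ hsing hsing')

theorem exists_perm_of_hasseIso (φ : hasse (bdSimplex n) ≃g hasse (bdSimplex n)) (hn : 2 ≤ n) :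
    ∃ f : Equiv.Perm (Fin (n + 1)),
      (∀ v, (φ v).1 = v.1.image f) ∨ ∀ v, (φ v).1 = v.1ᶜ.image f := by
  let s : BdFace n := ⟨{0}, singleton_mem_bdSimplex_faces (by omega) 0⟩
  have hs : s.1.card = 1 := card_singleton 0
  rcases card_apply_eq_one_or φ hn (Or.inl hs) with h | h
  · obtain ⟨f, hf⟩ := exists_perm_of_card_apply_singleton φ hn hs h
    exact ⟨f, Or.inl hf⟩
  · let c := complIso (compl_mem_bdSimplex_faces n)
    have hcs : ((φ.trans c) s).1.card = 1 := by
      have := card_add_card_compl (φ s).1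
      rw [Fintype.card_fin] at this
      show (φ s).1ᶜ.card = 1
      omega
    obtain ⟨f, hf⟩ := exists_perm_of_card_apply_singleton (φ.trans c) hn hs hcs
    refine ⟨f, Or.inr fun v => ?_⟩
    rw [Equiv.Perm.image_compl, ← hf v]
    exact (compl_compl _).symm

theorem perm_mem_autK_bdSimplex (e : Equiv.Perm (Fin (n + 1))) : e ∈ autK (bdSimplex n) :=
  fun s => by
    rw [mem_bdSimplex_faces_iff, mem_bdSimplex_faces_iff, card_image_of_injective _ e.injective]

theorem isPrimitive_singleton_pair (hn : 2 ≤ n) {a b : Fin (n + 1)} (hab : a ≠ b) :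
    IsPrimitive (bdSimplex n) ({a}, {a, b}) := by
  have hc : ({a, b} : Finset (Fin (n + 1))).card = 2 := card_pair hab
  refine ⟨mem_bdSimplex_faces_iff.2 ?_, mem_bdSimplex_faces_iff.2 ?_, by simp, ?_⟩ <;>
    simp only [hc, card_singleton] <;> omega

theorem morseAutHom_bdSimplex_injective (hn : 2 ≤ n) :
    Function.Injective (morseAutHom (bdSimplex n) (compl_mem_bdSimplex_faces n)) := by
  rw [injective_iff_map_eq_one]
  rintro ⟨f, i⟩ h
  have hval := congrArg Subtype.val h
  let x {a b : Fin (n + 1)} (hab : a ≠ b) : MVert (bdSimplex n) :=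
    ⟨({a}, {a, b}), isPrimitive_singleton_pair hn hab⟩
  rcases (by decide : ∀ i : Multiplicative (ZMod 2), i = 1 ∨ i = .ofAdd 1) i with rfl | rfl
  · rw [morseAutHom_one_val] at hval
    have : Nontrivial (Fin (n + 1)) := Fin.nontrivial_iff_two_le.2 (by omega)
    refine Prod.ext (Subtype.ext (Equiv.ext fun a => ?_)) rfl
    obtain ⟨b, hb⟩ := exists_ne a
    have : ({a} : Finset (Fin (n + 1))).image f.1 = {a} :=
      congrArg (fun P : Equiv.Perm (MVert (bdSimplex n)) => (P (x hb.symm)).val.1) hval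
    simpa using this
  · -- the first face of `f_* (π_* p)` depends only on `p.2`, that of `p` is `p.1`
    rw [morseAutHom_ofAdd_one_val] at hval
    obtain ⟨a, -, b, -, c, -, hab, hac, hbc⟩ :=
      (two_lt_card (s := (univ : Finset (Fin (n + 1))))).1
        (by rw [card_univ, Fintype.card_fin]; omega)
    have hfst : ∀ {d} (had : a ≠ d), ({a, d} : Finset (Fin (n + 1)))ᶜ.image f.1 = {a} :=
      fun had => congrArg (fun P : Equiv.Perm (MVert (bdSimplex n)) => (P (x had)).val.1) hval
    have := compl_injective (image_injective f.1.injective ((hfst hab).trans (hfst hac).symm))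
    have hc : c ∈ ({a, b} : Finset (Fin (n + 1))) :=
      this ▸ mem_insert_of_mem (mem_singleton_self c)
    simp [hac.symm, hbc.symm] at hc

theorem morseAutHom_bdSimplex_surjective (hn : 2 ≤ n) :
    Function.Surjective (morseAutHom (bdSimplex n) (compl_mem_bdSimplex_faces n)) := by
  rintro ⟨P, hP⟩
  let φ := hasseIso (neighborSet_hasse_bdSimplex_nontrivial hn) hP
  have hends (x : MVert (bdSimplex n)) :
      ends (P x).val = {(φ ⟨_, x.2.1⟩).1, (φ ⟨_, x.2.2.1⟩).1} :=
    ends_apply_eq_pair (neighborSet_hasse_bdSimplex_nontrivial hn) hP rfl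
  obtain ⟨f, hf | hf⟩ := exists_perm_of_hasseIso φ hn
  · refine ⟨(⟨f, perm_mem_autK_bdSimplex f⟩, 1), Subtype.ext ?_⟩
    rw [morseAutHom_one_val]
    exact eq_of_ends_apply_eq fun x => by rw [hends, hf, hf]; rfl
  · refine ⟨(⟨f, perm_mem_autK_bdSimplex f⟩, .ofAdd 1), Subtype.ext ?_⟩
    rw [morseAutHom_ofAdd_one_val]
    exact eq_of_ends_apply_eq fun x => by rw [hends, hf, hf]; exact pair_comm _ _

theorem morseAutHom_bdSimplex_bijective (hn : 2 ≤ n) :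
    Function.Bijective (morseAutHom (bdSimplex n) (compl_mem_bdSimplex_faces n)) :=
  ⟨morseAutHom_bdSimplex_injective hn, morseAutHom_bdSimplex_surjective hn⟩

end BdSimplex

/-- for `n ≥ 2`, `Aut(M(∂Δⁿ)) ≅ Aut(∂Δⁿ) × ℤ/2ℤ`, via
`(f, i) ↦ f_* ∘ π_*^i`, where `π_*` is the ghost automorphism induced by the
complementation map `σ ↦ δ - σ`. -/
theorem autMorse_bd (n : ℕ) (hn : 2 ≤ n) :
    ∃ P : Equiv.Perm (MVert (bdSimplex n)),
      P ∈ autK (morse (bdSimplex n)) ∧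
      (∀ p : MVert (bdSimplex n), (P p).val = (p.val.2ᶜ, p.val.1ᶜ)) ∧
      ∃ φ : autK (bdSimplex n) × Multiplicative (ZMod 2) ≃* autK (morse (bdSimplex n)),
        ∀ (f : autK (bdSimplex n)) (p : MVert (bdSimplex n)),
          ((φ (f, 1) : Equiv.Perm (MVert (bdSimplex n))) p).val =
            (p.val.1.image ⇑(f : Equiv.Perm (Fin (n + 1))),
             p.val.2.image ⇑(f : Equiv.Perm (Fin (n + 1)))) ∧
          ((φ (f, Multiplicative.ofAdd 1) : Equiv.Perm (MVert (bdSimplex n))) p) =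
            (φ (f, 1) : Equiv.Perm (MVert (bdSimplex n))) (P p) := by
  refine ⟨ghost (compl_mem_bdSimplex_faces n), ghost_mem_autK _, fun p => rfl,
    MulEquiv.ofBijective _ (morseAutHom_bdSimplex_bijective hn),
    fun f p => ⟨?_, ?_⟩⟩
  · rw [MulEquiv.ofBijective_apply, morseAutHom_one_val]
    rfl
  · rw [MulEquiv.ofBijective_apply, MulEquiv.ofBijective_apply, morseAutHom_one_val,
      morseAutHom_ofAdd_one_val]
    rfl
end
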